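/- arXiv:1906.10280 — 7 statements merged into one kernel-verified Lean document; each statement's English description precedes it below -/
import Mathlib

section
/- Let α, β, γ be three planes in PG(8,q) whose span is all of PG(8,q) (so they are pairwise disjoint and in general position). If P is a point of PG(8,q) not lying on any line that meets two of α, β, γ, then there exists exactly one plane through P that meets each of α, β, γ. -/
open Module

section Aux
variable {F : Type*} [Field F] {M : Type*} [AddCommGroup M] [Module F M] [FiniteDimensional F M]

lemma aux_rank_sup (A B : Submodule F M) (h : A ⊓ B = ⊥) :
    finrank F ↥(A ⊔ B) = finrank F A + finrank F B := by
  have H := Submodule.finrank_sup_add_finrank_inf_eq A B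
  rw [h] at H
  simpa using H

lemma aux_line (A B : Submodule F M) (hAB : A ⊓ B = ⊥) {x y : M}
    (hx : x ∈ A) (hy : y ∈ B) (hx0 : x ≠ 0) (hy0 : y ≠ 0) :
    finrank F ↥(Submodule.span F {x} ⊔ Submodule.span F {y}) = 2 ∧
      (Submodule.span F {x} ⊔ Submodule.span F {y}) ⊓ A ≠ ⊥ ∧
      (Submodule.span F {x} ⊔ Submodule.span F {y}) ⊓ B ≠ ⊥ := by
  have hsx : Submodule.span F {x} ≤ A := by
    rw [Submodule.span_le]; simpa using hx
  have hsy : Submodule.span F {y} ≤ B := by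
    rw [Submodule.span_le]; simpa using hy
  have hinf : Submodule.span F {x} ⊓ Submodule.span F {y} = ⊥ :=
    le_bot_iff.1 (hAB ▸ inf_le_inf hsx hsy)
  refine ⟨?_, ?_, ?_⟩
  · rw [aux_rank_sup _ _ hinf, finrank_span_singleton hx0, finrank_span_singleton hy0]
  · exact (Submodule.ne_bot_iff _).2
      ⟨x, ⟨Submodule.mem_sup_left (Submodule.mem_span_singleton_self x), hx⟩, hx0⟩
  · exact (Submodule.ne_bot_iff _).2
      ⟨y, ⟨Submodule.mem_sup_right (Submodule.mem_span_singleton_self y), hy⟩, hy0⟩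

lemma aux_rank3 (A B C : Submodule F M) (hAB : A ⊓ B = ⊥) (hABC : (A ⊔ B) ⊓ C = ⊥)
    {x y z : M} (hx : x ∈ A) (hy : y ∈ B) (hz : z ∈ C)
    (hx0 : x ≠ 0) (hy0 : y ≠ 0) (hz0 : z ≠ 0) :
    finrank F ↥(Submodule.span F {x} ⊔ Submodule.span F {y} ⊔ Submodule.span F {z}) = 3 := by
  have hsx : Submodule.span F {x} ≤ A := by rw [Submodule.span_le]; simpa using hx
  have hsy : Submodule.span F {y} ≤ B := by rw [Submodule.span_le]; simpa using hy
  have hsz : Submodule.span F {z} ≤ C := by rw [Submodule.span_le]; simpa using hz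
  have hinf : Submodule.span F {x} ⊓ Submodule.span F {y} = ⊥ :=
    le_bot_iff.1 (hAB ▸ inf_le_inf hsx hsy)
  have hinf2 : (Submodule.span F {x} ⊔ Submodule.span F {y}) ⊓ Submodule.span F {z} = ⊥ :=
    le_bot_iff.1 (hABC ▸ inf_le_inf (sup_le_sup hsx hsy) hsz)
  rw [aux_rank_sup _ _ hinf2, aux_rank_sup _ _ hinf,
    finrank_span_singleton hx0, finrank_span_singleton hy0, finrank_span_singleton hz0]
end Aux

/-- In PG(8,q), if three planes α, β, γ span the whole space and P is a
point not lying on any line that meets two of α, β, γ, then there is exactly one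
plane through P meeting each of α, β, γ. (Projective subspaces are modelled as
linear subspaces of `F^9`: a point has rank 1, a line rank 2, a plane rank 3.) -/
theorem stmt0 {F : Type*} [Field F] [Fintype F]
    (α β γ : Submodule F (Fin 9 → F))
    (hα : finrank F α = 3) (hβ : finrank F β = 3) (hγ : finrank F γ = 3)
    (hspan : α ⊔ β ⊔ γ = ⊤)
    (P : Submodule F (Fin 9 → F)) (hP : finrank F P = 1)
    (hline : ¬ ∃ ℓ : Submodule F (Fin 9 → F), finrank F ℓ = 2 ∧ P ≤ ℓ ∧
      ((ℓ ⊓ α ≠ ⊥ ∧ ℓ ⊓ β ≠ ⊥) ∨ (ℓ ⊓ α ≠ ⊥ ∧ ℓ ⊓ γ ≠ ⊥) ∨ (ℓ ⊓ β ≠ ⊥ ∧ ℓ ⊓ γ ≠ ⊥))) :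
    ∃! π : Submodule F (Fin 9 → F), finrank F π = 3 ∧ P ≤ π ∧
      π ⊓ α ≠ ⊥ ∧ π ⊓ β ≠ ⊥ ∧ π ⊓ γ ≠ ⊥ := by
  classical
  -- dimension bookkeeping
  have h9 : finrank F (Fin 9 → F) = 9 := Module.finrank_fin_fun F
  have hsum := Submodule.finrank_sup_add_finrank_inf_eq α β
  have hsum2 := Submodule.finrank_sup_add_finrank_inf_eq (α ⊔ β) γ
  have htop : finrank F ↥(α ⊔ β ⊔ γ) = 9 := by
    rw [hspan, finrank_top, h9]
  rw [hα, hβ] at hsum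
  rw [hγ, htop] at hsum2
  have hαβ : α ⊓ β = ⊥ := by
    rw [← Submodule.finrank_eq_zero (S := α ⊓ β)]; omega
  have hABγ : (α ⊔ β) ⊓ γ = ⊥ := by
    rw [← Submodule.finrank_eq_zero (S := (α ⊔ β) ⊓ γ)]; omega
  have hαγ : α ⊓ γ = ⊥ := le_bot_iff.1 (hABγ ▸ inf_le_inf_right γ le_sup_left)
  have hβγ : β ⊓ γ = ⊥ := le_bot_iff.1 (hABγ ▸ inf_le_inf_right γ le_sup_right)
  -- uniqueness of decomposition
  have duniq : ∀ a₁ b₁ c₁ a₂ b₂ c₂ : Fin 9 → F, a₁ ∈ α → b₁ ∈ β → c₁ ∈ γ →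
      a₂ ∈ α → b₂ ∈ β → c₂ ∈ γ → a₁ + b₁ + c₁ = a₂ + b₂ + c₂ →
      a₁ = a₂ ∧ b₁ = b₂ ∧ c₁ = c₂ := by
    intro a₁ b₁ c₁ a₂ b₂ c₂ ha₁ hb₁ hc₁ ha₂ hb₂ hc₂ h
    have key : (a₁ - a₂) + (b₁ - b₂) = c₂ - c₁ := by linear_combination h
    have hcmem : c₂ - c₁ ∈ (α ⊔ β) ⊓ γ := by
      refine ⟨?_, sub_mem hc₂ hc₁⟩
      rw [← key]
      exact add_mem (Submodule.mem_sup_left (sub_mem ha₁ ha₂))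
        (Submodule.mem_sup_right (sub_mem hb₁ hb₂))
    rw [hABγ, Submodule.mem_bot] at hcmem
    have hc : c₁ = c₂ := by linear_combination -hcmem
    have key2 : a₁ - a₂ = b₂ - b₁ := by linear_combination h + hcmem
    have hamem : a₁ - a₂ ∈ α ⊓ β := ⟨sub_mem ha₁ ha₂, key2 ▸ sub_mem hb₂ hb₁⟩
    rw [hαβ, Submodule.mem_bot] at hamem
    have ha : a₁ = a₂ := by linear_combination hamem
    refine ⟨ha, ?_, hc⟩
    linear_combination h - hamem + hcmem
  -- pick a generator of P
  have hPbot : P ≠ ⊥ := by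
    intro h; rw [h] at hP; simp at hP
  obtain ⟨p, hpP, hp0⟩ := Submodule.exists_mem_ne_zero_of_ne_bot hPbot
  have hPsp : Submodule.span F {p} = P := by
    refine Submodule.eq_of_le_of_finrank_le ?_ ?_
    · rw [Submodule.span_le]; simpa using hpP
    · rw [hP, finrank_span_singleton hp0]
  -- decompose p
  have hpT : p ∈ α ⊔ β ⊔ γ := by rw [hspan]; trivial
  obtain ⟨u, hu, c, hc, huc⟩ := Submodule.mem_sup.1 hpT
  obtain ⟨a, ha, b, hb, hab⟩ := Submodule.mem_sup.1 hu
  have heq : a + b + c = p := by rw [hab, huc]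
  have hαbot : α ≠ ⊥ := by intro h; rw [h] at hα; simp at hα
  have hβbot : β ≠ ⊥ := by intro h; rw [h] at hβ; simp at hβ
  obtain ⟨a₀, ha₀, ha₀0⟩ := Submodule.exists_mem_ne_zero_of_ne_bot hαbot
  obtain ⟨b₀, hb₀, hb₀0⟩ := Submodule.exists_mem_ne_zero_of_ne_bot hβbot
  -- helper for producing lines through P
  have mkline : ∀ (x y : Fin 9 → F), p ∈ Submodule.span F {x} ⊔ Submodule.span F {y} →
      P ≤ Submodule.span F {x} ⊔ Submodule.span F {y} := by
    intro x y hpmem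
    rw [← hPsp, Submodule.span_le]; simpa using hpmem
  have ha0 : a ≠ 0 := by
    intro h0
    subst h0
    by_cases hb0 : b = 0
    · have hpc : p ∈ γ := by rw [← heq, hb0]; simpa using hc
      obtain ⟨h1, h2, h3⟩ := aux_line α γ hαγ ha₀ hpc ha₀0 hp0
      exact hline ⟨_, h1, mkline a₀ p (Submodule.mem_sup_right
        (Submodule.mem_span_singleton_self p)), Or.inr (Or.inl ⟨h2, h3⟩)⟩
    · by_cases hc0 : c = 0
      · have hpb : p ∈ β := by rw [← heq, hc0]; simpa using hb
        obtain ⟨h1, h2, h3⟩ := aux_line α β hαβ ha₀ hpb ha₀0 hp0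
        exact hline ⟨_, h1, mkline a₀ p (Submodule.mem_sup_right
          (Submodule.mem_span_singleton_self p)), Or.inl ⟨h2, h3⟩⟩
      · obtain ⟨h1, h2, h3⟩ := aux_line β γ hβγ hb hc hb0 hc0
        have hpmem : p ∈ Submodule.span F {b} ⊔ Submodule.span F {c} := by
          rw [← heq]
          simpa using add_mem (Submodule.mem_sup_left (Submodule.mem_span_singleton_self b))
            (Submodule.mem_sup_right (Submodule.mem_span_singleton_self c))
        exact hline ⟨_, h1, mkline b c hpmem, Or.inr (Or.inr ⟨h2, h3⟩)⟩
  have hb0 : b ≠ 0 := by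
    intro h0
    subst h0
    by_cases hc0 : c = 0
    · have hpa : p ∈ α := by rw [← heq, hc0]; simpa using ha
      obtain ⟨h1, h2, h3⟩ := aux_line α β hαβ hpa hb₀ hp0 hb₀0
      exact hline ⟨_, h1, mkline p b₀ (Submodule.mem_sup_left
        (Submodule.mem_span_singleton_self p)), Or.inl ⟨h2, h3⟩⟩
    · obtain ⟨h1, h2, h3⟩ := aux_line α γ hαγ ha hc ha0 hc0
      have hpmem : p ∈ Submodule.span F {a} ⊔ Submodule.span F {c} := by
        rw [← heq]
        simpa using add_mem (Submodule.mem_sup_left (Submodule.mem_span_singleton_self a))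
          (Submodule.mem_sup_right (Submodule.mem_span_singleton_self c))
      exact hline ⟨_, h1, mkline a c hpmem, Or.inr (Or.inl ⟨h2, h3⟩)⟩
  have hc0 : c ≠ 0 := by
    intro h0
    subst h0
    obtain ⟨h1, h2, h3⟩ := aux_line α β hαβ ha hb ha0 hb0
    have hpmem : p ∈ Submodule.span F {a} ⊔ Submodule.span F {b} := by
      rw [← heq]
      simpa using add_mem (Submodule.mem_sup_left (Submodule.mem_span_singleton_self a))
        (Submodule.mem_sup_right (Submodule.mem_span_singleton_self b))
    exact hline ⟨_, h1, mkline a b hpmem, Or.inl ⟨h2, h3⟩⟩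
  -- the candidate plane
  set π₀ : Submodule F (Fin 9 → F) :=
    Submodule.span F {a} ⊔ Submodule.span F {b} ⊔ Submodule.span F {c} with hπ₀
  have hπ₀3 : finrank F ↥π₀ = 3 := aux_rank3 α β γ hαβ hABγ ha hb hc ha0 hb0 hc0
  have hpπ₀ : p ∈ π₀ := by
    rw [← heq]
    exact add_mem (Submodule.mem_sup_left (add_mem
      (Submodule.mem_sup_left (Submodule.mem_span_singleton_self a))
      (Submodule.mem_sup_right (Submodule.mem_span_singleton_self b))))
      (Submodule.mem_sup_right (Submodule.mem_span_singleton_self c))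
  have haπ₀ : a ∈ π₀ := Submodule.mem_sup_left
    (Submodule.mem_sup_left (Submodule.mem_span_singleton_self a))
  have hbπ₀ : b ∈ π₀ := Submodule.mem_sup_left
    (Submodule.mem_sup_right (Submodule.mem_span_singleton_self b))
  have hcπ₀ : c ∈ π₀ := Submodule.mem_sup_right (Submodule.mem_span_singleton_self c)
  refine ⟨π₀, ⟨hπ₀3, ?_, ?_, ?_, ?_⟩, ?_⟩
  · rw [← hPsp, Submodule.span_le]; simpa using hpπ₀
  · exact (Submodule.ne_bot_iff _).2 ⟨a, ⟨haπ₀, ha⟩, ha0⟩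
  · exact (Submodule.ne_bot_iff _).2 ⟨b, ⟨hbπ₀, hb⟩, hb0⟩
  · exact (Submodule.ne_bot_iff _).2 ⟨c, ⟨hcπ₀, hc⟩, hc0⟩
  -- uniqueness
  rintro π ⟨hπ3, hPπ, hπα, hπβ, hπγ⟩
  obtain ⟨a', ha'm, ha'0⟩ := (Submodule.ne_bot_iff _).1 hπα
  obtain ⟨b', hb'm, hb'0⟩ := (Submodule.ne_bot_iff _).1 hπβ
  obtain ⟨c', hc'm, hc'0⟩ := (Submodule.ne_bot_iff _).1 hπγ
  obtain ⟨ha'π, ha'α⟩ := ha'm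
  obtain ⟨hb'π, hb'β⟩ := hb'm
  obtain ⟨hc'π, hc'γ⟩ := hc'm
  set S : Submodule F (Fin 9 → F) :=
    Submodule.span F {a'} ⊔ Submodule.span F {b'} ⊔ Submodule.span F {c'} with hS
  have hS3 : finrank F ↥S = 3 := aux_rank3 α β γ hαβ hABγ ha'α hb'β hc'γ ha'0 hb'0 hc'0
  have hSπ : S ≤ π := by
    refine sup_le (sup_le ?_ ?_) ?_ <;> rw [Submodule.span_le] <;> simpa [ha'π, hb'π, hc'π]
  have hSeq : S = π := Submodule.eq_of_le_of_finrank_le hSπ (by rw [hπ3, hS3])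
  have hpS : p ∈ S := hSeq ▸ hPπ hpP
  obtain ⟨u', hu', w, hw, huw⟩ := Submodule.mem_sup.1 hpS
  obtain ⟨s, hs, t, ht, hst⟩ := Submodule.mem_sup.1 hu'
  obtain ⟨l, hl⟩ := Submodule.mem_span_singleton.1 hs
  obtain ⟨m, hm⟩ := Submodule.mem_span_singleton.1 ht
  obtain ⟨n, hn⟩ := Submodule.mem_span_singleton.1 hw
  have hdec : l • a' + m • b' + n • c' = p := by rw [hl, hm, hn, hst, huw]
  obtain ⟨hea, heb, hec⟩ := duniq a b c (l • a') (m • b') (n • c') ha hb hc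
    (α.smul_mem l ha'α) (β.smul_mem m hb'β) (γ.smul_mem n hc'γ) (by rw [heq, hdec])
  have hl0 : l ≠ 0 := by rintro rfl; rw [zero_smul] at hea; exact ha0 hea
  have hm0 : m ≠ 0 := by rintro rfl; rw [zero_smul] at heb; exact hb0 heb
  have hn0 : n ≠ 0 := by rintro rfl; rw [zero_smul] at hec; exact hc0 hec
  have ha' : a' ∈ π₀ := by
    have : a' = l⁻¹ • a := by rw [hea, smul_smul, inv_mul_cancel₀ hl0, one_smul]
    rw [this]; exact π₀.smul_mem _ haπ₀
  have hb' : b' ∈ π₀ := by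
    have : b' = m⁻¹ • b := by rw [heb, smul_smul, inv_mul_cancel₀ hm0, one_smul]
    rw [this]; exact π₀.smul_mem _ hbπ₀
  have hc' : c' ∈ π₀ := by
    have : c' = n⁻¹ • c := by rw [hec, smul_smul, inv_mul_cancel₀ hn0, one_smul]
    rw [this]; exact π₀.smul_mem _ hcπ₀
  have hSπ₀ : S ≤ π₀ := by
    refine sup_le (sup_le ?_ ?_) ?_ <;> rw [Submodule.span_le] <;> simpa [ha', hb', hc']
  have : S = π₀ := Submodule.eq_of_le_of_finrank_le hSπ₀ (by rw [hπ₀3, hS3])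
  rw [← hSeq, this]
end

section
/- In PG(8,q³) with Bose 2-spread transversal planes Γ, Γ^q, Γ^{q²} (three pairwise disjoint planes that together span PG(8,q³)), any two distinct T-planes (planes meeting all three transversal planes) are either disjoint, meet in a T-point, or meet in a T-line. -/
open Module

section Aux

variable {K V : Type*} [Field K] [AddCommGroup V] [Module K V] [FiniteDimensional K V]

/-- Independence of three 3-dim subspaces spanning a 9-dim space. -/
private lemma aux_indep (hV : finrank K V = 9)
    {A B C : Submodule K V} (hA : finrank K A = 3) (hB : finrank K B = 3)
    (hC : finrank K C = 3) (h : A ⊔ B ⊔ C = ⊤) :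
    A ⊓ (B ⊔ C) = ⊥ ∧ B ⊓ C = ⊥ := by
  have h1 := Submodule.finrank_sup_add_finrank_inf_eq B C
  have h2 := Submodule.finrank_sup_add_finrank_inf_eq A (B ⊔ C)
  rw [← sup_assoc, h] at h2
  rw [finrank_top, hV, hA] at h2
  rw [hB, hC] at h1
  constructor
  · exact Submodule.finrank_eq_zero.mp (by omega)
  · exact Submodule.finrank_eq_zero.mp (by omega)

/-- A 3-dim subspace meeting each of three independent subspaces nontrivially
meets each in a line and is the sup of those three lines. -/
private lemma aux_plane {A B C : Submodule K V}
    (hAB : A ⊓ B = ⊥) (hABC : (A ⊔ B) ⊓ C = ⊥)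
    {π : Submodule K V} (hπ : finrank K π = 3)
    (ha : π ⊓ A ≠ ⊥) (hb : π ⊓ B ≠ ⊥) (hc : π ⊓ C ≠ ⊥) :
    finrank K ↥(π ⊓ A) = 1 ∧ finrank K ↥(π ⊓ B) = 1 ∧ finrank K ↥(π ⊓ C) = 1 ∧
      (π ⊓ A) ⊔ (π ⊓ B) ⊔ (π ⊓ C) = π := by
  have da : 1 ≤ finrank K ↥(π ⊓ A) := Submodule.one_le_finrank_iff.mpr ha
  have db : 1 ≤ finrank K ↥(π ⊓ B) := Submodule.one_le_finrank_iff.mpr hb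
  have dc : 1 ≤ finrank K ↥(π ⊓ C) := Submodule.one_le_finrank_iff.mpr hc
  have e1 : (π ⊓ A) ⊓ (π ⊓ B) = ⊥ := by
    rw [eq_bot_iff]
    exact le_trans (inf_le_inf inf_le_right inf_le_right) hAB.le
  have e2 : ((π ⊓ A) ⊔ (π ⊓ B)) ⊓ (π ⊓ C) = ⊥ := by
    rw [eq_bot_iff]
    refine le_trans (inf_le_inf ?_ inf_le_right) hABC.le
    exact sup_le (le_trans inf_le_right le_sup_left) (le_trans inf_le_right le_sup_right)
  have f1 := Submodule.finrank_sup_add_finrank_inf_eq (π ⊓ A) (π ⊓ B)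
  rw [e1, finrank_bot, add_zero] at f1
  have f2 := Submodule.finrank_sup_add_finrank_inf_eq ((π ⊓ A) ⊔ (π ⊓ B)) (π ⊓ C)
  rw [e2, finrank_bot, add_zero] at f2
  have hle : (π ⊓ A) ⊔ (π ⊓ B) ⊔ (π ⊓ C) ≤ π :=
    sup_le (sup_le inf_le_left inf_le_left) inf_le_left
  have f3 : finrank K ↥((π ⊓ A) ⊔ (π ⊓ B) ⊔ (π ⊓ C)) ≤ 3 := hπ ▸ Submodule.finrank_mono hle
  refine ⟨by omega, by omega, by omega, ?_⟩
  exact Submodule.eq_of_le_of_finrank_eq hle (by omega)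

/-- A nonzero subspace of a line is the line. -/
private lemma aux_line_s2 {N L : Submodule K V} (hN : N ≠ ⊥) (hle : N ≤ L)
    (hL : finrank K L = 1) : N = L := by
  have := Submodule.one_le_finrank_iff.mpr hN
  have := hL ▸ Submodule.finrank_mono hle
  exact Submodule.eq_of_le_of_finrank_eq hle (by omega)

end Aux


/-- In PG(8,q³) with three transversal planes Γ, Γ^q, Γ^{q²} spanning
the whole space, two distinct T-planes (planes meeting all three transversal
planes) are disjoint, meet in a T-point (a point lying in one of the transversal
planes), or meet in a T-line (a line meeting two of the transversal planes).
Here `K` plays the role of `F_{q³}` and subspaces of `K^9` model projective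
subspaces (rank 1 = point, rank 2 = line, rank 3 = plane). -/
theorem stmt2 {K : Type*} [Field K]
    (Γ₀ Γ₁ Γ₂ : Submodule K (Fin 9 → K))
    (h0 : finrank K Γ₀ = 3) (h1 : finrank K Γ₁ = 3) (h2 : finrank K Γ₂ = 3)
    (hspan : Γ₀ ⊔ Γ₁ ⊔ Γ₂ = ⊤)
    (π₁ π₂ : Submodule K (Fin 9 → K))
    (hπ₁ : finrank K π₁ = 3) (hπ₂ : finrank K π₂ = 3)
    (hT₁ : π₁ ⊓ Γ₀ ≠ ⊥ ∧ π₁ ⊓ Γ₁ ≠ ⊥ ∧ π₁ ⊓ Γ₂ ≠ ⊥)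
    (hT₂ : π₂ ⊓ Γ₀ ≠ ⊥ ∧ π₂ ⊓ Γ₁ ≠ ⊥ ∧ π₂ ⊓ Γ₂ ≠ ⊥)
    (hne : π₁ ≠ π₂) :
    π₁ ⊓ π₂ = ⊥ ∨
    (finrank K ↥(π₁ ⊓ π₂) = 1 ∧ (π₁ ⊓ π₂ ≤ Γ₀ ∨ π₁ ⊓ π₂ ≤ Γ₁ ∨ π₁ ⊓ π₂ ≤ Γ₂)) ∨
    (finrank K ↥(π₁ ⊓ π₂) = 2 ∧
      (((π₁ ⊓ π₂) ⊓ Γ₀ ≠ ⊥ ∧ (π₁ ⊓ π₂) ⊓ Γ₁ ≠ ⊥) ∨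
       ((π₁ ⊓ π₂) ⊓ Γ₀ ≠ ⊥ ∧ (π₁ ⊓ π₂) ⊓ Γ₂ ≠ ⊥) ∨
       ((π₁ ⊓ π₂) ⊓ Γ₁ ≠ ⊥ ∧ (π₁ ⊓ π₂) ⊓ Γ₂ ≠ ⊥))) := by
  have hV : finrank K (Fin 9 → K) = 9 := by simp
  -- independence facts
  obtain ⟨i0, i12⟩ := aux_indep hV h0 h1 h2 hspan
  obtain ⟨i1, i02⟩ := aux_indep hV h1 h0 h2 (by rw [sup_comm Γ₁ Γ₀]; exact hspan)
  obtain ⟨i2, i01⟩ := aux_indep hV h2 h0 h1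
    (by rw [sup_assoc, sup_comm Γ₂ (Γ₀ ⊔ Γ₁)]; exact hspan)
  have i01' : (Γ₀ ⊔ Γ₁) ⊓ Γ₂ = ⊥ := by rw [inf_comm]; exact i2
  -- structure of the two planes
  obtain ⟨dL0, dL1, dL2, hLsup⟩ := aux_plane i01 i01' hπ₁ hT₁.1 hT₁.2.1 hT₁.2.2
  obtain ⟨dM0, dM1, dM2, hMsup⟩ := aux_plane i01 i01' hπ₂ hT₂.1 hT₂.2.1 hT₂.2.2
  set D := π₁ ⊓ π₂ with hD
  -- decomposition of the intersection
  have hdecomp : D ≤ (D ⊓ Γ₀) ⊔ (D ⊓ Γ₁) ⊔ (D ⊓ Γ₂) := by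
    intro v hv
    have hv1 : v ∈ (π₁ ⊓ Γ₀) ⊔ (π₁ ⊓ Γ₁) ⊔ (π₁ ⊓ Γ₂) := by rw [hLsup]; exact hv.1
    have hv2 : v ∈ (π₂ ⊓ Γ₀) ⊔ (π₂ ⊓ Γ₁) ⊔ (π₂ ⊓ Γ₂) := by rw [hMsup]; exact hv.2
    obtain ⟨y, hy, c, hc, rfl⟩ := Submodule.mem_sup.mp hv1
    obtain ⟨a, ha, b, hb, rfl⟩ := Submodule.mem_sup.mp hy
    obtain ⟨y', hy', c', hc', hvv⟩ := Submodule.mem_sup.mp hv2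
    obtain ⟨a', ha', b', hb', rfl⟩ := Submodule.mem_sup.mp hy'
    have ha0 : a = a' := by
      have hmem : a - a' ∈ Γ₀ ⊓ (Γ₁ ⊔ Γ₂) := by
        constructor
        · exact sub_mem ha.2 ha'.2
        · have : a - a' = (b' + c') - (b + c) := by
            have := hvv
            abel_nf
            abel_nf at this ⊢
            linear_combination (norm := abel) - this
          rw [this]
          exact sub_mem (add_mem (Submodule.mem_sup_left hb'.2) (Submodule.mem_sup_right hc'.2))
            (add_mem (Submodule.mem_sup_left hb.2) (Submodule.mem_sup_right hc.2))
      rw [i0] at hmem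
      exact sub_eq_zero.mp hmem
    have hb0 : b = b' := by
      have hmem : b - b' ∈ Γ₁ ⊓ Γ₂ := by
        constructor
        · exact sub_mem hb.2 hb'.2
        · have : b - b' = c' - c := by
            rw [ha0] at hvv
            linear_combination (norm := abel) - hvv
          rw [this]
          exact sub_mem hc'.2 hc.2
      rw [i12] at hmem
      exact sub_eq_zero.mp hmem
    have hc0 : c = c' := by
      rw [ha0, hb0] at hvv
      exact (add_left_cancel hvv).symm
    refine Submodule.add_mem _ (Submodule.add_mem _ ?_ ?_) ?_
    · exact Submodule.mem_sup_left (Submodule.mem_sup_left ⟨⟨ha.1, ha0 ▸ ha'.1⟩, ha.2⟩)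
    · exact Submodule.mem_sup_left (Submodule.mem_sup_right ⟨⟨hb.1, hb0 ▸ hb'.1⟩, hb.2⟩)
    · exact Submodule.mem_sup_right ⟨⟨hc.1, hc0 ▸ hc'.1⟩, hc.2⟩
  have hDeq : D = (D ⊓ Γ₀) ⊔ (D ⊓ Γ₁) ⊔ (D ⊓ Γ₂) :=
    le_antisymm hdecomp (sup_le (sup_le inf_le_left inf_le_left) inf_le_left)
  -- if D meets Γᵢ nontrivially, the two planes have the same point on Γᵢ
  have key : ∀ G : Submodule K (Fin 9 → K),
      finrank K ↥(π₁ ⊓ G) = 1 → finrank K ↥(π₂ ⊓ G) = 1 → D ⊓ G ≠ ⊥ →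
      π₁ ⊓ G = π₂ ⊓ G ∧ finrank K ↥(D ⊓ G) = 1 := by
    intro G hLG hMG hN
    have hNL : D ⊓ G = π₁ ⊓ G :=
      aux_line_s2 hN (inf_le_inf_right G inf_le_left) hLG
    have hNM : D ⊓ G = π₂ ⊓ G :=
      aux_line_s2 hN (inf_le_inf_right G inf_le_right) hMG
    exact ⟨hNL ▸ hNM, hNL ▸ hLG⟩
  -- not all three intersections can be nonzero
  have hnot : ¬(D ⊓ Γ₀ ≠ ⊥ ∧ D ⊓ Γ₁ ≠ ⊥ ∧ D ⊓ Γ₂ ≠ ⊥) := by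
    rintro ⟨n0, n1, n2⟩
    have e0 := (key Γ₀ dL0 dM0 n0).1
    have e1 := (key Γ₁ dL1 dM1 n1).1
    have e2 := (key Γ₂ dL2 dM2 n2).1
    exact hne (by rw [← hLsup, e0, e1, e2, hMsup])
  -- dimension of a sup of two distinct lines among the Γ's
  have rank2 : ∀ G G' : Submodule K (Fin 9 → K), G ⊓ G' = ⊥ →
      finrank K ↥(D ⊓ G) = 1 → finrank K ↥(D ⊓ G') = 1 →
      finrank K ↥((D ⊓ G) ⊔ (D ⊓ G')) = 2 := by
    intro G G' hGG' dG dG'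
    have e : (D ⊓ G) ⊓ (D ⊓ G') = ⊥ := by
      rw [eq_bot_iff]
      exact le_trans (inf_le_inf inf_le_right inf_le_right) hGG'.le
    have f := Submodule.finrank_sup_add_finrank_inf_eq (D ⊓ G) (D ⊓ G')
    rw [e, finrank_bot, add_zero, dG, dG'] at f
    exact f
  by_cases n0 : D ⊓ Γ₀ = ⊥ <;> by_cases n1 : D ⊓ Γ₁ = ⊥ <;> by_cases n2 : D ⊓ Γ₂ = ⊥
  · -- all bot : D = ⊥
    left
    rw [hDeq, n0, n1, n2, sup_bot_eq, sup_bot_eq]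
  · -- only Γ₂
    right; left
    have hk := key Γ₂ dL2 dM2 n2
    have hD2 := hDeq
    rw [n0, n1, bot_sup_eq, bot_sup_eq] at hD2
    exact ⟨by rw [hD2]; exact hk.2, Or.inr (Or.inr (le_trans hD2.le inf_le_right))⟩
  · -- only Γ₁
    right; left
    have hk := key Γ₁ dL1 dM1 n1
    have hD2 := hDeq
    rw [n0, n2, bot_sup_eq, sup_bot_eq] at hD2
    exact ⟨by rw [hD2]; exact hk.2, Or.inr (Or.inl (le_trans hD2.le inf_le_right))⟩
  · -- Γ₁ and Γ₂
    right; right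
    have hk1 := key Γ₁ dL1 dM1 n1
    have hk2 := key Γ₂ dL2 dM2 n2
    refine ⟨?_, Or.inr (Or.inr ⟨n1, n2⟩)⟩
    have hD2 := hDeq
    rw [n0, bot_sup_eq] at hD2
    rw [hD2]
    exact rank2 Γ₁ Γ₂ i12 hk1.2 hk2.2
  · -- only Γ₀
    right; left
    have hk := key Γ₀ dL0 dM0 n0
    have hD2 := hDeq
    rw [n1, n2, sup_bot_eq, sup_bot_eq] at hD2
    exact ⟨by rw [hD2]; exact hk.2, Or.inl (le_trans hD2.le inf_le_right)⟩
  · -- Γ₀ and Γ₂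
    right; right
    have hk0 := key Γ₀ dL0 dM0 n0
    have hk2 := key Γ₂ dL2 dM2 n2
    refine ⟨?_, Or.inr (Or.inl ⟨n0, n2⟩)⟩
    have hD2 := hDeq
    rw [n1, sup_bot_eq] at hD2
    rw [hD2]
    exact rank2 Γ₀ Γ₂ i02 hk0.2 hk2.2
  · -- Γ₀ and Γ₁
    right; right
    have hk0 := key Γ₀ dL0 dM0 n0
    have hk1 := key Γ₁ dL1 dM1 n1
    refine ⟨?_, Or.inl ⟨n0, n1⟩⟩
    have hD2 := hDeq
    rw [n2, sup_bot_eq] at hD2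
    rw [hD2]
    exact rank2 Γ₀ Γ₁ i01 hk0.2 hk1.2
  · exact absurd ⟨n0, n1, n2⟩ hnot
end

section
/- Let F be homogeneous of degree k over F_{q³} with expansion G = f₀ + τf₁ + τ²f₂ over the basis {1,τ,τ²}. In PG(8,q³), the variety V(G) is a cone with vertex the 5-space ⟨Γ^q, Γ^{q²}⟩ and base V(G) ∩ Γ = K, where Γ, Γ^q, Γ^{q²} are the transversal planes of the Bose spread and K is the copy in Γ of the plane variety V(F) of PG(2,q³). That is, a point P ∈ PG(8,q³) lying on a line joining Q ∈ Γ to R ∈ ⟨Γ^q,Γ^{q²}⟩ satisfies G(P)=0 iff F vanishes at the point of PG(2,q³) corresponding to Q, and every point of V(G) lies on such a line. -/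
/-!
Write `ℓ r = r₀ + r₁ τ + r₂ τ²` for a row `r`. Then `G v = P (ℓ v₀, ℓ v₁, ℓ v₂)`, so `V(G)` is the
preimage of `V(P)` under the row-wise map `ℓ`. Since `τ`, `σ = τ^q`, `ρ = τ^{q²}` are the three
distinct roots of the cubic, Vieta's formulas identify `a` with minus the coefficient vector of
`(X - σ)(X - ρ)`. Hence `ℓ a = -(τ - σ)(τ - ρ) ≠ 0`, while the Frobenius images of `a`, the
coefficient vectors of `(X - ρ)(X - τ)` and `(X - τ)(X - σ)`, span `ker ℓ`. So the vertex consists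
of the matrices all of whose rows lie in `ker ℓ`, every matrix is `xA₀ + yA₁ + zA₂ + R` with `R` in
the vertex, and homogeneity gives `G (xA₀ + yA₁ + zA₂ + R) = (ℓ a)^k P(x, y, z)`.
-/

open MvPolynomial

theorem MvPolynomial.IsHomogeneous.eval_smul {R σ : Type*} [CommSemiring R]
    {P : MvPolynomial σ R} {k : ℕ} (hP : P.IsHomogeneous k) (c : R) (x : σ → R) :
    eval (c • x) P = c ^ k * eval x P := by
  rw [eval_eq, eval_eq, Finset.mul_sum]
  refine Finset.sum_congr rfl fun d hd => ?_
  have hdeg : ∑ i ∈ d.support, d i = k := by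
    have h := hP (mem_support_iff.mp hd)
    simpa [Finsupp.weight_apply, Finsupp.sum] using h
  simp only [Pi.smul_apply, smul_eq_mul, mul_pow, Finset.prod_mul_distrib,
    Finset.prod_pow_eq_pow_sum, hdeg]
  ring

theorem FiniteField.mem_range_algebraMap_of_pow_card_eq_self {F K : Type*} [Field F] [Fintype F]
    [Field K] [Algebra F K] {x : K} (hx : x ^ Fintype.card F = x) :
    x ∈ (algebraMap F K).range := by
  have hsplit : (Polynomial.X ^ Fintype.card F - Polynomial.X : Polynomial F).Splits := by
    rw [Polynomial.splits_iff_card_roots, FiniteField.roots_X_pow_card_sub_X, ← Finset.card_def,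
      Finset.card_univ, FiniteField.X_pow_card_sub_X_natDegree_eq F Fintype.one_lt_card]
  exact hsplit.mem_range_of_isRoot (FiniteField.X_pow_card_sub_X_ne_zero F Fintype.one_lt_card)
    (by simp [hx])

theorem pow_card_ne_self_of_irreducible {F K : Type*} [Field F] [Fintype F] [Field K] [Algebra F K]
    {m : Polynomial F} (hm : Irreducible m) (hdeg : m.degree ≠ 1) {x : K}
    (hx : Polynomial.aeval x m = 0) : x ^ Fintype.card F ≠ x := by
  intro hxF
  obtain ⟨c, rfl⟩ := FiniteField.mem_range_algebraMap_of_pow_card_eq_self hxF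
  rw [Polynomial.aeval_algebraMap_apply_eq_algebraMap_eval,
    map_eq_zero_iff _ (algebraMap F K).injective] at hx
  exact hdeg (Polynomial.degree_eq_one_of_irreducible_of_root hm hx)

theorem cubic_vieta_of_distinct_roots {K : Type*} [Field K] {b₀ b₁ b₂ x y z : K}
    (hxy : x ≠ y) (hxz : x ≠ z) (hyz : y ≠ z) (hx : x ^ 3 = b₀ + b₁ * x + b₂ * x ^ 2)
    (hy : y ^ 3 = b₀ + b₁ * y + b₂ * y ^ 2) (hz : z ^ 3 = b₀ + b₁ * z + b₂ * z ^ 2) :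
    b₂ = x + y + z ∧ b₁ = -(x * y + x * z + y * z) := by
  have hsec : ∀ {u v : K}, u ≠ v → u ^ 3 = b₀ + b₁ * u + b₂ * u ^ 2 →
      v ^ 3 = b₀ + b₁ * v + b₂ * v ^ 2 → u ^ 2 + u * v + v ^ 2 = b₁ + b₂ * (u + v) := by
    intro u v huv hu hv
    have h : (u - v) * (u ^ 2 + u * v + v ^ 2 - b₁ - b₂ * (u + v)) = 0 := by
      linear_combination hu - hv
    linear_combination (mul_eq_zero.mp h).resolve_left (sub_ne_zero.mpr huv)
  have h₂ : b₂ = x + y + z := by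
    have h : (y - z) * (b₂ - (x + y + z)) = 0 := by
      linear_combination hsec hxz hx hz - hsec hxy hx hy
    linear_combination (mul_eq_zero.mp h).resolve_left (sub_ne_zero.mpr hyz)
  exact ⟨h₂, by linear_combination -hsec hxy hx hy - (x + y) * h₂⟩

section PowerCombination

variable {K : Type*} [Field K]

def powerCombination (τ : K) : (Fin 3 → K) →ₗ[K] K :=
  Fintype.linearCombination K fun j : Fin 3 => τ ^ (j : ℕ)

theorem powerCombination_apply (τ : K) (r : Fin 3 → K) :
    powerCombination τ r = r 0 + r 1 * τ + r 2 * τ ^ 2 := by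
  simp [powerCombination, Fintype.linearCombination_apply, Fin.sum_univ_three]

/-- Coefficients of `(X - u) * (X - v)`, constant term first. -/
def quadCoeffs (u v : K) : Fin 3 → K := ![u * v, -(u + v), 1]

theorem quadCoeffs_comm (u v : K) : quadCoeffs u v = quadCoeffs v u := by
  simp only [quadCoeffs, mul_comm u, add_comm u]

theorem map_quadCoeffs (φ : K →+* K) (u v : K) :
    (fun j => φ (quadCoeffs u v j)) = quadCoeffs (φ u) (φ v) := by
  ext j; fin_cases j <;> simp [quadCoeffs]

theorem powerCombination_quadCoeffs (τ u v : K) :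
    powerCombination τ (quadCoeffs u v) = (τ - u) * (τ - v) := by
  simp only [powerCombination_apply, quadCoeffs, Matrix.cons_val_zero, Matrix.cons_val_one,
    Matrix.cons_val]
  ring

theorem span_quadCoeffs_eq_ker {τ σ ρ : K} (hσρ : σ ≠ ρ) :
    Submodule.span K {quadCoeffs τ σ, quadCoeffs τ ρ} = LinearMap.ker (powerCombination τ) := by
  refine le_antisymm ?_ fun r hr => ?_
  · simp [Submodule.span_le, Set.insert_subset_iff, powerCombination_quadCoeffs]
  rw [LinearMap.mem_ker, powerCombination_apply] at hr
  have hσρ' : σ - ρ ≠ 0 := sub_ne_zero.mpr hσρ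
  refine Submodule.mem_span_pair.mpr
    ⟨(-r 1 - (τ + ρ) * r 2) / (σ - ρ), (r 1 + (τ + σ) * r 2) / (σ - ρ), ?_⟩
  ext j
  fin_cases j <;>
    simp only [quadCoeffs, Pi.add_apply, Matrix.smul_cons, smul_eq_mul, mul_one, Matrix.smul_empty,
      Fin.zero_eta, Fin.mk_one, Fin.reduceFinMk, Matrix.cons_val_zero, Matrix.cons_val_one,
      Matrix.cons_val] <;>
    field_simp
  · linear_combination -(σ - ρ) * hr
  · ring
  · ring

theorem span_frobenius_neg_quadCoeffs_eq_ker {φ : K →+* K} (h3 : ∀ x, φ (φ (φ x)) = x) {τ : K}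
    (hne : φ τ ≠ φ (φ τ)) :
    Submodule.span K {fun j => φ ((-quadCoeffs (φ τ) (φ (φ τ))) j),
      fun j => φ (φ ((-quadCoeffs (φ τ) (φ (φ τ))) j))} = LinearMap.ker (powerCombination τ) := by
  have hmap : ∀ u v j, φ ((-quadCoeffs u v) j) = (-quadCoeffs (φ u) (φ v)) j := fun u v j => by
    simp [← map_quadCoeffs φ u v]
  simp only [hmap, h3]
  change Submodule.span K {-quadCoeffs (φ (φ τ)) τ, -quadCoeffs τ (φ τ)} = _
  rw [quadCoeffs_comm _ τ, ← Set.neg_singleton, ← Set.neg_insert, Submodule.span_neg,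
    span_quadCoeffs_eq_ker hne.symm]

end PowerCombination

theorem eval_aeval_powerCombination {K ι : Type*} [Field K] (τ : K) (P : MvPolynomial ι K)
    (w : ι × Fin 3 → K) :
    eval w (aeval (fun i => ∑ j : Fin 3, C (τ ^ (j : ℕ)) * X (i, j) :
      ι → MvPolynomial (ι × Fin 3) K) P) = eval (fun i => powerCombination τ fun j => w (i, j)) P := by
  change eval₂Hom (RingHom.id K) w (bind₁ _ P) = eval₂Hom (RingHom.id K) _ P
  rw [eval₂Hom_bind₁]
  congr 2 with i
  simp [powerCombination, Fintype.linearCombination_apply, mul_comm]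

theorem Submodule.span_range_single_union {R ι M : Type*} [Semiring R] [AddCommMonoid M]
    [Module R M] [DecidableEq ι] [Finite ι] (u w : M) :
    span R (Set.range (fun i => Pi.single i u) ∪ Set.range (fun i => Pi.single i w) :
      Set (ι → M)) = pi Set.univ fun _ => span R {u, w} := by
  rw [← iSup_map_single]
  simp_rw [map_span, ← span_iUnion]
  congr 1
  ext v
  simp [Set.image_insert_eq, exists_or, eq_comm]

section Cone

variable {K M ι : Type*} [Field K] [AddCommGroup M] [Module K M] (ℓ : M →ₗ[K] K)

theorem eval_map_smul_add_of_forall_mem_ker (a : M) {P : MvPolynomial ι K} {k : ℕ}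
    (hP : P.IsHomogeneous k) (c : ι → K) {R : ι → M} (hR : ∀ i, ℓ (R i) = 0) :
    eval (fun i => ℓ (c i • a + R i)) P = ℓ a ^ k * eval c P := by
  rw [← hP.eval_smul]
  congr 2 with i
  simp [hR, mul_comm]

theorem exists_eq_smul_add_of_forall_mem_ker {a : M} (ha : ℓ a ≠ 0) (v : ι → M) :
    ∃ c : ι → K, ∃ R : ι → M, (∀ i, ℓ (R i) = 0) ∧ v = fun i => c i • a + R i :=
  ⟨fun i => ℓ (v i) / ℓ a, fun i => v i - (ℓ (v i) / ℓ a) • a, fun i => by simp [ha], by simp⟩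

theorem zeroLocus_comp_rows_is_cone {a : M} (ha : ℓ a ≠ 0) {A : Fin 3 → Fin 3 → M}
    (hA : ∀ i, A i = Pi.single i a) {P : MvPolynomial (Fin 3) K} {k : ℕ}
    (hP : P.IsHomogeneous k) :
    (∀ x y z : K, ∀ R ∈ Submodule.pi Set.univ fun _ : Fin 3 => LinearMap.ker ℓ,
      (eval (fun i => ℓ ((x • A 0 + y • A 1 + z • A 2 + R) i)) P = 0 ↔ eval ![x, y, z] P = 0)) ∧
    (∀ v : Fin 3 → M, eval (fun i => ℓ (v i)) P = 0 ↔
      ∃ x y z : K, ∃ R ∈ Submodule.pi Set.univ fun _ : Fin 3 => LinearMap.ker ℓ,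
        v = x • A 0 + y • A 1 + z • A 2 + R ∧ eval ![x, y, z] P = 0) := by
  have hrows : ∀ x y z : K, x • A 0 + y • A 1 + z • A 2 = fun i => ![x, y, z] i • a := by
    intro x y z
    ext i
    fin_cases i <;> simp [hA]
  have hcone : ∀ x y z : K, ∀ R ∈ Submodule.pi Set.univ fun _ : Fin 3 => LinearMap.ker ℓ,
      eval (fun i => ℓ ((x • A 0 + y • A 1 + z • A 2 + R) i)) P = ℓ a ^ k * eval ![x, y, z] P := by
    intro x y z R hR
    rw [hrows]
    exact eval_map_smul_add_of_forall_mem_ker ℓ a hP _ fun i => hR i trivial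
  refine ⟨fun x y z R hR => ?_, fun v => ⟨fun hv => ?_, ?_⟩⟩
  · rw [hcone x y z R hR, mul_eq_zero, or_iff_right (pow_ne_zero k ha)]
  · obtain ⟨c, R, hR, rfl⟩ := exists_eq_smul_add_of_forall_mem_ker ℓ ha v
    have hR' : R ∈ Submodule.pi Set.univ fun _ : Fin 3 => LinearMap.ker ℓ := fun i _ => hR i
    have hdecomp : (fun i => c i • a + R i) = c 0 • A 0 + c 1 • A 1 + c 2 • A 2 + R := by
      rw [hrows]
      ext i
      fin_cases i <;> rfl
    rw [hdecomp, hcone _ _ _ R hR', mul_eq_zero] at hv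
    exact ⟨c 0, c 1, c 2, R, hR', hdecomp, hv.resolve_left (pow_ne_zero k ha)⟩
  · rintro ⟨x, y, z, R, hR, rfl, hx⟩
    rw [hcone x y z R hR, hx, mul_zero]

end Cone

section Frobenius

variable {F K : Type*} [Field F] [Fintype F] [Field K] [Algebra F K] {q : ℕ} {φ : K →+* K}

theorem frobenius_algebraMap (hF : Fintype.card F = q) (hφ : ∀ x, φ x = x ^ q) (t : F) :
    φ (algebraMap F K t) = algebraMap F K t := by
  rw [hφ, ← map_pow, ← hF, FiniteField.pow_card]

variable {t₀ t₁ t₂ : F}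

theorem frobenius_isRoot_cubic (hF : Fintype.card F = q) (hφ : ∀ x, φ x = x ^ q) {x : K}
    (hx : x ^ 3 = algebraMap F K t₀ + algebraMap F K t₁ * x + algebraMap F K t₂ * x ^ 2) :
    φ x ^ 3 = algebraMap F K t₀ + algebraMap F K t₁ * φ x + algebraMap F K t₂ * φ x ^ 2 := by
  simpa [frobenius_algebraMap hF hφ] using congrArg φ hx

variable [Fintype K]

theorem frobenius_frobenius_frobenius (hK : Fintype.card K = q ^ 3) (hφ : ∀ x, φ x = x ^ q)
    (x : K) : φ (φ (φ x)) = x := by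
  rw [hφ, hφ, hφ, ← pow_mul, ← pow_mul, show q * (q * q) = Fintype.card K by rw [hK]; ring,
    FiniteField.pow_card]

theorem frobenius_orbit_pairwise_ne (hF : Fintype.card F = q) (hK : Fintype.card K = q ^ 3)
    (hφ : ∀ x, φ x = x ^ q)
    (hirr : Irreducible (Polynomial.X ^ 3 - Polynomial.C t₂ * Polynomial.X ^ 2
      - Polynomial.C t₁ * Polynomial.X - Polynomial.C t₀)) {x : K}
    (hx : x ^ 3 = algebraMap F K t₀ + algebraMap F K t₁ * x + algebraMap F K t₂ * x ^ 2) :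
    x ≠ φ x ∧ x ≠ φ (φ x) ∧ φ x ≠ φ (φ x) := by
  have hfix : φ x ≠ x := by
    rw [hφ, ← hF]
    have hdeg : (Polynomial.X ^ 3 - Polynomial.C t₂ * Polynomial.X ^ 2
        - Polynomial.C t₁ * Polynomial.X - Polynomial.C t₀).degree = 3 := by compute_degree!
    refine pow_card_ne_self_of_irreducible hirr (by rw [hdeg]; decide) ?_
    simp only [map_sub, map_mul, map_pow, Polynomial.aeval_X, Polynomial.aeval_C]
    linear_combination hx
  refine ⟨hfix.symm, fun h => hfix ?_, fun h => hfix (φ.injective h).symm⟩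
  exact (congrArg φ h).trans (frobenius_frobenius_frobenius hK hφ x)

theorem transversal_eq_neg_quadCoeffs (hF : Fintype.card F = q) (hK : Fintype.card K = q ^ 3)
    (hφ : ∀ x, φ x = x ^ q)
    (hirr : Irreducible (Polynomial.X ^ 3 - Polynomial.C t₂ * Polynomial.X ^ 2
      - Polynomial.C t₁ * Polynomial.X - Polynomial.C t₀)) {x : K}
    (hx : x ^ 3 = algebraMap F K t₀ + algebraMap F K t₁ * x + algebraMap F K t₂ * x ^ 2) :
    ![algebraMap F K t₁ + algebraMap F K t₂ * x - x ^ 2, algebraMap F K t₂ - x, -1] =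
      -quadCoeffs (φ x) (φ (φ x)) := by
  obtain ⟨h₀₁, h₀₂, h₁₂⟩ := frobenius_orbit_pairwise_ne hF hK hφ hirr hx
  have hx₁ := frobenius_isRoot_cubic hF hφ hx
  obtain ⟨hb₂, hb₁⟩ := cubic_vieta_of_distinct_roots h₀₁ h₀₂ h₁₂ hx hx₁ (frobenius_isRoot_cubic hF hφ hx₁)
  ext j
  fin_cases j <;>
    simp only [quadCoeffs, hb₁, hb₂, Pi.neg_apply, Fin.zero_eta, Fin.mk_one, Fin.reduceFinMk,
      Matrix.cons_val_zero, Matrix.cons_val_one, Matrix.cons_val] <;>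
    ring

end Frobenius

theorem stmt13_general {F K : Type*} [Field F] [Fintype F] [Field K] [Fintype K] [Algebra F K]
    (p n q : ℕ) [ExpChar K p]
    (hq : q = p ^ n) (hF : Fintype.card F = q) (hK : Fintype.card K = q ^ 3)
    (t₀ t₁ t₂ : F) (τ : K)
    (hirr : Irreducible (Polynomial.X ^ 3 - Polynomial.C t₂ * Polynomial.X ^ 2
      - Polynomial.C t₁ * Polynomial.X - Polynomial.C t₀))
    (hroot : τ ^ 3 = algebraMap F K t₀ + algebraMap F K t₁ * τ + algebraMap F K t₂ * τ ^ 2)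
    (a : Fin 3 → K)
    (ha : a = ![algebraMap F K t₁ + algebraMap F K t₂ * τ - τ ^ 2,
      algebraMap F K t₂ - τ, -1])
    (A : Fin 3 → Fin 3 → Fin 3 → K)
    (hA : ∀ i j l, A i j l = if j = i then a l else 0)
    (φ : K →+* K) (hφ : φ = iterateFrobenius K p n)
    (Fmap : (Fin 3 → Fin 3 → K) → Fin 3 → Fin 3 → K)
    (hFmap : ∀ v j l, Fmap v j l = φ (v j l))
    (vertex : Submodule K (Fin 3 → Fin 3 → K))
    (hvertex : vertex = Submodule.span K
      (Set.range (fun i => Fmap (A i)) ∪ Set.range (fun i => Fmap (Fmap (A i)))))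
    (k : ℕ) (P : MvPolynomial (Fin 3) K) (hP : P.IsHomogeneous k)
    (G : MvPolynomial (Fin 3 × Fin 3) K)
    (hG : G = aeval (fun i : Fin 3 =>
          ∑ j : Fin 3, C (τ ^ (j : ℕ)) * X (i, j) :
            Fin 3 → MvPolynomial (Fin 3 × Fin 3) K) P) :
    (∀ x y z : K, ¬(x = 0 ∧ y = 0 ∧ z = 0) → ∀ R ∈ vertex,
      (eval (fun ij : Fin 3 × Fin 3 =>
          (x • A 0 + y • A 1 + z • A 2 + R) ij.1 ij.2) G = 0 ↔
        eval ![x, y, z] P = 0)) ∧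
    (∀ v : Fin 3 → Fin 3 → K,
      eval (fun ij : Fin 3 × Fin 3 => v ij.1 ij.2) G = 0 ↔
        ∃ x y z : K, ∃ R ∈ vertex,
          v = x • A 0 + y • A 1 + z • A 2 + R ∧ eval ![x, y, z] P = 0) := by
  have hφq : ∀ x, φ x = x ^ q := fun x => by rw [hφ, iterateFrobenius_def, hq]
  obtain ⟨hτσ, hτρ, hσρ⟩ := frobenius_orbit_pairwise_ne hF hK hφq hirr hroot
  have ha₀ : a = -quadCoeffs (φ τ) (φ (φ τ)) :=
    ha ▸ transversal_eq_neg_quadCoeffs hF hK hφq hirr hroot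
  have hs : powerCombination τ a ≠ 0 := by
    rw [ha₀, map_neg, powerCombination_quadCoeffs, neg_ne_zero]
    exact mul_ne_zero (sub_ne_zero.2 hτσ) (sub_ne_zero.2 hτρ)
  have hA' : ∀ i, A i = Pi.single i a := by
    intro i
    ext j l
    rw [hA, Pi.single_apply]
    split_ifs <;> rfl
  have hsingle : ∀ i v, Fmap (Pi.single i v) = Pi.single i fun l => φ (v l) := by
    intro i v
    ext j l
    rw [hFmap, Pi.single_apply, Pi.single_apply]
    split_ifs <;> simp
  have hvert : vertex = Submodule.pi Set.univ fun _ => LinearMap.ker (powerCombination τ) := by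
    simp only [hvertex, hA', hsingle]
    rw [Submodule.span_range_single_union, ha₀,
      span_frobenius_neg_quadCoeffs_eq_ker (frobenius_frobenius_frobenius hK hφq) hσρ]
  have hGeval : ∀ v : Fin 3 → Fin 3 → K, eval (fun ij : Fin 3 × Fin 3 => v ij.1 ij.2) G =
      eval (fun i => powerCombination τ (v i)) P := fun v => by
    rw [hG, eval_aeval_powerCombination]
  obtain ⟨hbase, hcover⟩ := zeroLocus_comp_rows_is_cone (powerCombination τ) hs hA' hP
  subst hvert
  simp only [hGeval]
  exact ⟨fun x y z _ => hbase x y z, hcover⟩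

/-- With G the expansion over the basis {1,τ,τ²} of a homogeneous
polynomial P of degree k over K = F_{q³}, the variety V(G) ⊂ PG(8,q³) is a cone
with vertex the 5-space ⟨Γ^q, Γ^{q²}⟩ and base the copy K of V(P) in the
transversal plane Γ = ⟨A₀,A₁,A₂⟩: a point xA₀+yA₁+zA₂+R (with (x,y,z) ≠ 0 and
R in the vertex) lies on V(G) iff P(x,y,z) = 0, and every point of V(G) is of
the form xA₀+yA₁+zA₂+R with R in the vertex and P(x,y,z) = 0. -/
theorem stmt13 {F K : Type*} [Field F] [Fintype F] [Field K] [Fintype K] [Algebra F K]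
    (p n q : ℕ) [Fact p.Prime] [CharP K p] [ExpChar K p]
    (hq : q = p ^ n) (hF : Fintype.card F = q) (hK : Fintype.card K = q ^ 3)
    (t₀ t₁ t₂ : F) (τ : K)
    (hirr : Irreducible (Polynomial.X ^ 3 - Polynomial.C t₂ * Polynomial.X ^ 2
      - Polynomial.C t₁ * Polynomial.X - Polynomial.C t₀))
    (hroot : τ ^ 3 = algebraMap F K t₀ + algebraMap F K t₁ * τ + algebraMap F K t₂ * τ ^ 2)
    (a : Fin 3 → K)
    (ha : a = ![algebraMap F K t₁ + algebraMap F K t₂ * τ - τ ^ 2,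
      algebraMap F K t₂ - τ, -1])
    (A : Fin 3 → Fin 3 → Fin 3 → K)
    (hA : ∀ i j l, A i j l = if j = i then a l else 0)
    (φ : K →+* K) (hφ : φ = iterateFrobenius K p n)
    (Fmap : (Fin 3 → Fin 3 → K) → Fin 3 → Fin 3 → K)
    (hFmap : ∀ v j l, Fmap v j l = φ (v j l))
    (vertex : Submodule K (Fin 3 → Fin 3 → K))
    (hvertex : vertex = Submodule.span K
      (Set.range (fun i => Fmap (A i)) ∪ Set.range (fun i => Fmap (Fmap (A i)))))
    (k : ℕ) (hk : 0 < k) (P : MvPolynomial (Fin 3) K) (hP : P.IsHomogeneous k)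
    (G : MvPolynomial (Fin 3 × Fin 3) K)
    (hG : G = aeval (fun i : Fin 3 =>
          ∑ j : Fin 3, C (τ ^ (j : ℕ)) * X (i, j) :
            Fin 3 → MvPolynomial (Fin 3 × Fin 3) K) P) :
    (∀ x y z : K, ¬(x = 0 ∧ y = 0 ∧ z = 0) → ∀ R ∈ vertex,
      (eval (fun ij : Fin 3 × Fin 3 =>
          (x • A 0 + y • A 1 + z • A 2 + R) ij.1 ij.2) G = 0 ↔
        eval ![x, y, z] P = 0)) ∧
    (∀ v : Fin 3 → Fin 3 → K,
      eval (fun ij : Fin 3 × Fin 3 => v ij.1 ij.2) G = 0 ↔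
        ∃ x y z : K, ∃ R ∈ vertex,
          v = x • A 0 + y • A 1 + z • A 2 + R ∧ eval ![x, y, z] P = 0) :=
  stmt13_general p n q hq hF hK t₀ t₁ t₂ τ hirr hroot a ha A hA φ hφ Fmap hFmap vertex hvertex k P
    hP G hG
end

section
/- Let K̄ = V(F) be a variety of PG(2,q³) with Bose variety V(f₀,f₁,f₂) in PG(8,q) and expansion G = f₀+τf₁+τ²f₂. In PG(8,q³), the extension V(f₀)* ∩ V(f₁)* ∩ V(f₂)* equals V(G) ∩ V(G^q) ∩ V(G^{q²}), and its pointset equals the union of the T-planes ⟨X, Y^q, Z^{q²}⟩ over all X, Y, Z ∈ K, where K ⊂ Γ is the copy of K̄ in the transversal plane Γ. -/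
open MvPolynomial


lemma three_nodes {L : Type*} [Field L] {τ s u d0 d1 d2 : L}
    (hsτ : s ≠ τ) (huτ : u ≠ τ) (hus : u ≠ s)
    (h1 : d0 + d1 * τ + d2 * τ ^ 2 = 0) (h2 : d0 + d1 * s + d2 * s ^ 2 = 0)
    (h3 : d0 + d1 * u + d2 * u ^ 2 = 0) :
    d0 = 0 ∧ d1 = 0 ∧ d2 = 0 := by
  have e1 : (s - τ) * (d1 + d2 * (s + τ)) = 0 := by linear_combination h2 - h1
  have e2 : (u - τ) * (d1 + d2 * (u + τ)) = 0 := by linear_combination h3 - h1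
  have f1 : d1 + d2 * (s + τ) = 0 := by
    rcases mul_eq_zero.mp e1 with h | h
    · exact absurd (sub_eq_zero.mp h) hsτ
    · exact h
  have f2 : d1 + d2 * (u + τ) = 0 := by
    rcases mul_eq_zero.mp e2 with h | h
    · exact absurd (sub_eq_zero.mp h) huτ
    · exact h
  have g1 : (u - s) * d2 = 0 := by linear_combination f2 - f1
  have hd2 : d2 = 0 := by
    rcases mul_eq_zero.mp g1 with h | h
    · exact absurd (sub_eq_zero.mp h) hus
    · exact h
  have hd1 : d1 = 0 := by linear_combination f1 - (s + τ) * hd2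
  exact ⟨by linear_combination h1 - τ * hd1 - τ ^ 2 * hd2, hd1, hd2⟩

lemma homog_eval_mul {σ L : Type*} [CommRing L] {Q : MvPolynomial σ L} {k : ℕ}
    (hQ : Q.IsHomogeneous k) (r : L) (w : σ → L) :
    eval (fun i => r * w i) Q = r ^ k * eval w Q := by
  rw [eval_eq, eval_eq, Finset.mul_sum]
  refine Finset.sum_congr rfl fun d hd => ?_
  have hdeg : ∑ i ∈ d.support, d i = k := by
    have h := hQ (MvPolynomial.mem_support_iff.mp hd)
    rw [← h, Finsupp.weight_apply, Finsupp.sum]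
    simp
  calc Q.coeff d * ∏ i ∈ d.support, (r * w i) ^ d i
      = Q.coeff d * ((∏ i ∈ d.support, r ^ d i) * ∏ i ∈ d.support, w i ^ d i) := by
        rw [← Finset.prod_mul_distrib]; simp_rw [mul_pow]
    _ = r ^ k * (Q.coeff d * ∏ i ∈ d.support, w i ^ d i) := by
        rw [Finset.prod_pow_eq_pow_sum, hdeg]; ring

lemma eval_map_comm {σ L : Type*} [CommSemiring L] (g : L →+* L) (w : σ → L)
    (Q : MvPolynomial σ L) :
    eval (fun i => g (w i)) (map g Q) = g (eval w Q) := by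
  rw [eval_map]
  have h := eval₂_comp_left g (RingHom.id L) w Q
  rw [RingHom.comp_id] at h
  rw [eval₂_id] at h
  rw [h]
  rfl


lemma fixed_mem_range {F L : Type*} [Field F] [Fintype F] [Field L] [Algebra F L]
    {q : ℕ} (hF : Fintype.card F = q) {x : L} (hx : x ^ q = x) :
    x ∈ Set.range (algebraMap F L) := by
  by_contra hmem
  have h2 : 1 < q := hF ▸ Fintype.one_lt_card
  classical
  set g : Polynomial L := Polynomial.X ^ q - Polynomial.X with hgdef
  have hg0 : g ≠ 0 := FiniteField.X_pow_card_sub_X_ne_zero L h2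
  have hdeg : g.natDegree = q := FiniteField.X_pow_card_sub_X_natDegree_eq L h2
  set T : Finset L := insert x (Finset.univ.image (algebraMap F L)) with hT
  have hsub : T ⊆ g.roots.toFinset := by
    intro t ht
    rw [Multiset.mem_toFinset, Polynomial.mem_roots']
    refine ⟨hg0, ?_⟩
    have : t ^ q = t := by
      rcases Finset.mem_insert.mp ht with rfl | hmem'
      · exact hx
      · obtain ⟨c, -, rfl⟩ := Finset.mem_image.mp hmem'
        rw [← map_pow]
        rw [show c ^ q = c from hF ▸ FiniteField.pow_card c]
    simp [hgdef, Polynomial.IsRoot, sub_eq_zero, this]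
  have hcard : T.card = q + 1 := by
    rw [hT, Finset.card_insert_of_notMem, Finset.card_image_of_injective _
      (algebraMap F L).injective, Finset.card_univ, hF]
    intro hmm
    obtain ⟨c, -, hc⟩ := Finset.mem_image.mp hmm
    exact hmem ⟨c, hc⟩
  have hle : T.card ≤ q :=
    le_trans (Finset.card_le_card hsub)
      (le_trans (Multiset.toFinset_card_le _) (le_trans (Polynomial.card_roots' g) hdeg.le))
  omega


/-- Let K̄ = V(P) be a variety of PG(2,q³), with Bose variety
V(f₀,f₁,f₂) in PG(8,q) and expansion G = f₀+τf₁+τ²f₂.  In PG(8,q³), the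
extension V(f₀)* ∩ V(f₁)* ∩ V(f₂)* equals V(G) ∩ V(G^q) ∩ V(G^{q²}), and its
pointset is the union of the T-planes ⟨X, Y^q, Z^{q²}⟩ over all X, Y, Z in the
copy K = {x A₀ + y A₁ + z A₂ : P(x,y,z) = 0} of K̄ in the transversal plane Γ. -/
theorem stmt14 {F K : Type*} [Field F] [Fintype F] [Field K] [Fintype K] [Algebra F K]
    (p n q : ℕ) [Fact p.Prime] [CharP K p] [ExpChar K p]
    (hq : q = p ^ n) (hF : Fintype.card F = q) (hK : Fintype.card K = q ^ 3)
    (t₀ t₁ t₂ : F) (τ : K)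
    (hirr : Irreducible (Polynomial.X ^ 3 - Polynomial.C t₂ * Polynomial.X ^ 2
      - Polynomial.C t₁ * Polynomial.X - Polynomial.C t₀))
    (hroot : τ ^ 3 = algebraMap F K t₀ + algebraMap F K t₁ * τ + algebraMap F K t₂ * τ ^ 2)
    (a : Fin 3 → K)
    (ha : a = ![algebraMap F K t₁ + algebraMap F K t₂ * τ - τ ^ 2,
      algebraMap F K t₂ - τ, -1])
    (A : Fin 3 → Fin 3 → Fin 3 → K)
    (hA : ∀ i j l, A i j l = if j = i then a l else 0)
    (φ : K →+* K) (hφ : φ = iterateFrobenius K p n)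
    (Fmap : (Fin 3 → Fin 3 → K) → Fin 3 → Fin 3 → K)
    (hFmap : ∀ v j l, Fmap v j l = φ (v j l))
    (k : ℕ) (hk : 0 < k) (P : MvPolynomial (Fin 3) K) (hP : P.IsHomogeneous k)
    (G : MvPolynomial (Fin 3 × Fin 3) K)
    (hG : G = aeval (fun i : Fin 3 =>
          ∑ j : Fin 3, C (τ ^ (j : ℕ)) * X (i, j) :
            Fin 3 → MvPolynomial (Fin 3 × Fin 3) K) P)
    (f : Fin 3 → MvPolynomial (Fin 3 × Fin 3) F)
    (hf : G = ∑ j : Fin 3, C (τ ^ (j : ℕ)) * map (algebraMap F K) (f j))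
    (ptΓ : (Fin 3 → K) → Fin 3 → Fin 3 → K)
    (hptΓ : ∀ x, ptΓ x = x 0 • A 0 + x 1 • A 1 + x 2 • A 2) :
    (∀ v : Fin 3 → Fin 3 → K,
      (∀ j, eval (fun ij : Fin 3 × Fin 3 => v ij.1 ij.2)
          (map (algebraMap F K) (f j)) = 0) ↔
        (eval (fun ij : Fin 3 × Fin 3 => v ij.1 ij.2) G = 0 ∧
         eval (fun ij : Fin 3 × Fin 3 => v ij.1 ij.2) (map φ G) = 0 ∧
         eval (fun ij : Fin 3 × Fin 3 => v ij.1 ij.2) (map (φ.comp φ) G) = 0)) ∧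
    (∀ v : Fin 3 → Fin 3 → K, v ≠ 0 →
      ((eval (fun ij : Fin 3 × Fin 3 => v ij.1 ij.2) G = 0 ∧
        eval (fun ij : Fin 3 × Fin 3 => v ij.1 ij.2) (map φ G) = 0 ∧
        eval (fun ij : Fin 3 × Fin 3 => v ij.1 ij.2) (map (φ.comp φ) G) = 0) ↔
       ∃ x y z : Fin 3 → K, x ≠ 0 ∧ y ≠ 0 ∧ z ≠ 0 ∧
         eval x P = 0 ∧ eval y P = 0 ∧ eval z P = 0 ∧
         v ∈ Submodule.span K {ptΓ x, Fmap (ptΓ y), Fmap (Fmap (ptΓ z))})) := by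
  set ρ := algebraMap F K with hρdef
  -- φ fixes the image of F
  have hfix : ∀ c : F, φ (ρ c) = ρ c := by
    intro c
    rw [hφ, iterateFrobenius_def, ← map_pow,
      show c ^ p ^ n = c from by rw [← hq, ← hF]; exact FiniteField.pow_card c]
  -- φ³ = id
  have hφ3 : ∀ x : K, φ (φ (φ x)) = x := by
    intro x
    rw [hφ, iterateFrobenius_def, iterateFrobenius_def, iterateFrobenius_def,
      ← pow_mul, ← pow_mul]
    rw [show p ^ n * (p ^ n * p ^ n) = q ^ 3 from by rw [hq]; ring, ← hK]
    exact FiniteField.pow_card x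
  set m : Polynomial F := Polynomial.X ^ 3 - Polynomial.C t₂ * Polynomial.X ^ 2
      - Polynomial.C t₁ * Polynomial.X - Polynomial.C t₀ with hm
  have haevalm : Polynomial.aeval τ m = 0 := by
    rw [hm]
    simp only [map_sub, map_pow, Polynomial.aeval_X, Polynomial.aeval_C, map_mul]
    linear_combination hroot
  have hmdeg : m.natDegree = 3 := by rw [hm]; compute_degree!
  -- τ is not fixed by φ
  have hτs : φ τ ≠ τ := by
    intro heq
    rw [hφ, iterateFrobenius_def] at heq
    obtain ⟨c, hc⟩ := fixed_mem_range (F := F) (L := K) (q := p ^ n) (hq ▸ hF) heq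
    have hev : Polynomial.eval c m = 0 := by
      have : Polynomial.aeval ((algebraMap F K) c) m = 0 := by rw [hc]; exact haevalm
      rw [Polynomial.aeval_algebraMap_apply] at this
      simpa using (algebraMap F K).injective (by simpa using this)
    have hdvd : (Polynomial.X - Polynomial.C c) ∣ m := Polynomial.dvd_iff_isRoot.mpr hev
    obtain ⟨u', hu'⟩ := hdvd
    rcases hirr.isUnit_or_isUnit hu' with h | h
    · exact Polynomial.not_isUnit_X_sub_C c h
    · obtain ⟨r, hr, hru⟩ := Polynomial.isUnit_iff.mp h
      have h3 : m.natDegree = 3 := hmdeg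
      rw [hu', ← hru, Polynomial.natDegree_mul (Polynomial.X_sub_C_ne_zero c)
        (by simpa using hr.ne_zero), Polynomial.natDegree_X_sub_C,
        Polynomial.natDegree_C] at h3
      omega
  -- separability: m'(τ) ≠ 0
  have hsep : m.Separable := PerfectField.separable_of_irreducible hirr
  obtain ⟨B1, B2, hAB⟩ := hsep
  have hder : Polynomial.aeval τ (Polynomial.derivative m) ≠ 0 := by
    have h1 := congrArg (Polynomial.aeval τ) hAB
    simp only [map_add, map_mul, map_one, haevalm, mul_zero, zero_add] at h1
    exact right_ne_zero_of_mul_eq_one h1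
  have hderval : Polynomial.aeval τ (Polynomial.derivative m)
      = 3 * τ ^ 2 - 2 * ρ t₂ * τ - ρ t₁ := by
    rw [hm]
    simp only [Polynomial.derivative_sub, Polynomial.derivative_mul, Polynomial.derivative_C,
      Polynomial.derivative_X_pow, Polynomial.derivative_X, Polynomial.derivative_C_mul]
    push_cast
    simp only [map_sub, map_add, map_mul, map_pow, Polynomial.aeval_X, Polynomial.aeval_C,
      map_ofNat, Polynomial.aeval_natCast, map_zero, map_one]
    push_cast
    ring
  have hρinj : Function.Injective ρ := ρ.injective
  have hφinj : Function.Injective φ := φ.injective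
  set s : K := φ τ with hsdef
  set u : K := φ s with hudef
  have hφu : φ u = τ := hφ3 τ
  have hsτ' : s ≠ τ := hτs
  have huτ' : u ≠ τ := by
    intro h
    exact hτs (by rw [← hφu, h])
  have hus : u ≠ s := fun h => hτs (hφinj h)
  have hs3 : s ^ 3 = ρ t₀ + ρ t₁ * s + ρ t₂ * s ^ 2 := by
    have h := congrArg φ hroot
    simpa only [map_add, map_mul, map_pow, hfix] using h
  have hu3 : u ^ 3 = ρ t₀ + ρ t₁ * u + ρ t₂ * u ^ 2 := by
    have h := congrArg φ hs3
    simpa only [map_add, map_mul, map_pow, hfix] using h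
  -- entries of a
  have ha0 : a 0 = ρ t₁ + ρ t₂ * τ - τ ^ 2 := by rw [ha]; rfl
  have ha1 : a 1 = ρ t₂ - τ := by rw [ha]; rfl
  have ha2 : a 2 = -1 := by rw [ha]; rfl
  set c : K := a 0 + a 1 * τ + a 2 * τ ^ 2 with hcdef
  have hc0 : c ≠ 0 := by
    intro h
    apply hder
    rw [hderval]
    rw [hcdef, ha0, ha1, ha2] at h
    linear_combination -h
  have hpas : a 0 + a 1 * s + a 2 * s ^ 2 = 0 := by
    have hprod : (s - τ) * (a 0 + a 1 * s + a 2 * s ^ 2) = 0 := by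
      rw [ha0, ha1, ha2]
      linear_combination hroot - hs3
    rcases mul_eq_zero.mp hprod with h | h
    · exact absurd (sub_eq_zero.mp h) hsτ'
    · exact h
  have hpau : a 0 + a 1 * u + a 2 * u ^ 2 = 0 := by
    have hprod : (u - τ) * (a 0 + a 1 * u + a 2 * u ^ 2) = 0 := by
      rw [ha0, ha1, ha2]
      linear_combination hroot - hu3
    rcases mul_eq_zero.mp hprod with h | h
    · exact absurd (sub_eq_zero.mp h) huτ'
    · exact h
  -- the nine pairing identities
  have e1 : a 0 + a 1 * τ + a 2 * τ ^ 2 = c := hcdef.symm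
  have e2 : a 0 + a 1 * s + a 2 * s ^ 2 = 0 := hpas
  have e3 : a 0 + a 1 * u + a 2 * u ^ 2 = 0 := hpau
  have e4 : φ (a 0) + φ (a 1) * τ + φ (a 2) * τ ^ 2 = 0 := by
    have h := congrArg φ hpau
    simpa only [map_add, map_mul, map_pow, map_zero, hφu] using h
  have e5 : φ (a 0) + φ (a 1) * s + φ (a 2) * s ^ 2 = φ c := by
    have h := congrArg φ e1
    simpa only [map_add, map_mul, map_pow] using h
  have e6 : φ (a 0) + φ (a 1) * u + φ (a 2) * u ^ 2 = 0 := by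
    have h := congrArg φ hpas
    simpa only [map_add, map_mul, map_pow, map_zero] using h
  have e7 : φ (φ (a 0)) + φ (φ (a 1)) * τ + φ (φ (a 2)) * τ ^ 2 = 0 := by
    have h := congrArg φ e6
    simpa only [map_add, map_mul, map_pow, map_zero, hφu] using h
  have e8 : φ (φ (a 0)) + φ (φ (a 1)) * s + φ (φ (a 2)) * s ^ 2 = 0 := by
    have h := congrArg φ e4
    simpa only [map_add, map_mul, map_pow, map_zero] using h
  have e9 : φ (φ (a 0)) + φ (φ (a 1)) * u + φ (φ (a 2)) * u ^ 2 = φ (φ c) := by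
    have h := congrArg φ e5
    simpa only [map_add, map_mul, map_pow] using h
  have hφc0 : φ c ≠ 0 := fun h => hc0 (hφinj (by rw [h, map_zero]))
  have hφφc0 : φ (φ c) ≠ 0 := fun h => hφc0 (hφinj (by rw [h, map_zero]))
  -- key evaluation lemma
  have key : ∀ (ψ : K →+* K) (v : Fin 3 → Fin 3 → K),
      eval (fun ij : Fin 3 × Fin 3 => v ij.1 ij.2) (map ψ G) =
      eval (fun i => v i 0 + v i 1 * ψ τ + v i 2 * ψ τ ^ 2) (map ψ P) := by
    intro ψ v
    rw [eval_map, hG, aeval_def, algebraMap_eq, ← eval₂_assoc, ← eval_map, ← eval₂_eq_eval_map,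
      ← eval₂_eq_eval_map]
    congr 1
    funext i
    rw [eval₂_sum]
    simp only [eval₂_mul, eval₂_C, eval₂_X, eval₂_pow, eval₂_one, map_pow, map_one,
      Fin.sum_univ_three, Fin.val_zero, Fin.val_one, Fin.val_two, pow_zero, pow_one, one_mul]
    ring
  have hcomp1 : (RingHom.id K).comp ρ = ρ := RingHom.id_comp ρ
  have hcompφ : φ.comp ρ = ρ := RingHom.ext hfix
  have hcompφφ : (φ.comp φ).comp ρ = ρ := by ext x; simp [hfix]
  have hsumf : ∀ (ψ : K →+* K), ψ.comp ρ = ρ → ∀ v : Fin 3 → Fin 3 → K,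
      eval (fun ij : Fin 3 × Fin 3 => v ij.1 ij.2) (map ψ G)
        = ∑ j : Fin 3, ψ τ ^ (j : ℕ) *
            eval (fun ij : Fin 3 × Fin 3 => v ij.1 ij.2) (map ρ (f j)) := by
    intro ψ hψ v
    rw [hf, map_sum (MvPolynomial.map ψ), map_sum (eval _)]
    refine Finset.sum_congr rfl fun j _ => ?_
    simp only [map_mul, MvPolynomial.map_C, map_pow, MvPolynomial.map_map, hψ, eval_C]
  constructor
  · intro v
    constructor
    · intro h
      have h0 := hsumf (RingHom.id K) hcomp1 v
      rw [map_id] at h0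
      have hb := hsumf φ hcompφ v
      have hc := hsumf (φ.comp φ) hcompφφ v
      simp only [h, mul_zero, Finset.sum_const_zero] at h0 hb hc
      exact ⟨h0, hb, hc⟩
    · rintro ⟨h1, h2, h3⟩ j
      have h0 := hsumf (RingHom.id K) hcomp1 v
      rw [map_id, h1] at h0
      have hb := hsumf φ hcompφ v
      rw [h2] at hb
      have hc := hsumf (φ.comp φ) hcompφφ v
      rw [h3] at hc
      simp only [Fin.sum_univ_three, Fin.val_zero, Fin.val_one, Fin.val_two, pow_zero, pow_one,
        one_mul, RingHom.id_apply, RingHom.coe_comp, Function.comp_apply, RingHom.comp_apply]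
        at h0 hb hc
      rw [← hsdef] at hb
      rw [← hsdef, ← hudef] at hc
      obtain ⟨w0, w1, w2⟩ := three_nodes hsτ' huτ' hus
        (d0 := eval (fun ij : Fin 3 × Fin 3 => v ij.1 ij.2) (map ρ (f 0)))
        (d1 := eval (fun ij : Fin 3 × Fin 3 => v ij.1 ij.2) (map ρ (f 1)))
        (d2 := eval (fun ij : Fin 3 × Fin 3 => v ij.1 ij.2) (map ρ (f 2)))
        (by linear_combination -h0) (by linear_combination -hb) (by linear_combination -hc)
      fin_cases j
      · exact w0
      · exact w1
      · exact w2
  · intro v hv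
    have hpt : ∀ (w : Fin 3 → K) (i l : Fin 3), ptΓ w i l = w i * a l := by
      intro w i l
      rw [hptΓ]
      simp only [Pi.add_apply, Pi.smul_apply, smul_eq_mul, hA]
      fin_cases i <;> simp
    have hFm1 : ∀ (w : Fin 3 → K) (i l : Fin 3), Fmap (ptΓ w) i l = φ (w i) * φ (a l) := by
      intro w i l; rw [hFmap, hpt, map_mul]
    have hFm2 : ∀ (w : Fin 3 → K) (i l : Fin 3),
        Fmap (Fmap (ptΓ w)) i l = φ (φ (w i)) * φ (φ (a l)) := by
      intro w i l; rw [hFmap, hFm1, map_mul]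
    constructor
    · rintro ⟨h1, h2, h3⟩
      set x : Fin 3 → K := fun i => (v i 0 + v i 1 * τ + v i 2 * τ ^ 2) / c with hxdef
      set y1 : Fin 3 → K := fun i => (v i 0 + v i 1 * s + v i 2 * s ^ 2) / φ c with hy1def
      set z1 : Fin 3 → K := fun i => (v i 0 + v i 1 * u + v i 2 * u ^ 2) / φ (φ c) with hz1def
      have hx : ∀ i, x i * c = v i 0 + v i 1 * τ + v i 2 * τ ^ 2 := fun i => by
        rw [hxdef]; field_simp
      have hy1 : ∀ i, y1 i * φ c = v i 0 + v i 1 * s + v i 2 * s ^ 2 := fun i => by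
        rw [hy1def]; field_simp
      have hz1 : ∀ i, z1 i * φ (φ c) = v i 0 + v i 1 * u + v i 2 * u ^ 2 := fun i => by
        rw [hz1def]; field_simp
      have hφsurj : Function.Surjective φ := Finite.injective_iff_surjective.mp hφinj
      choose pre hpre using hφsurj
      set y : Fin 3 → K := fun i => pre (y1 i) with hydef
      set z : Fin 3 → K := fun i => pre (pre (z1 i)) with hzdef
      have hyy : ∀ i, φ (y i) = y1 i := fun i => hpre _
      have hzz : ∀ i, φ (φ (z i)) = z1 i := fun i => by rw [hzdef]; rw [hpre, hpre]
      have hdec : ∀ i l, v i l = x i * a l + y1 i * φ (a l) + z1 i * φ (φ (a l)) := by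
        intro i
        obtain ⟨d0, d1, d2⟩ := three_nodes (τ := τ) (s := s) (u := u) hsτ' huτ' hus
          (d0 := v i 0 - (x i * a 0 + y1 i * φ (a 0) + z1 i * φ (φ (a 0))))
          (d1 := v i 1 - (x i * a 1 + y1 i * φ (a 1) + z1 i * φ (φ (a 1))))
          (d2 := v i 2 - (x i * a 2 + y1 i * φ (a 2) + z1 i * φ (φ (a 2))))
          (by linear_combination (-1 : K) * hx i - x i * e1 - y1 i * e4 - z1 i * e7)
          (by linear_combination (-1 : K) * hy1 i - x i * e2 - y1 i * e5 - z1 i * e8)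
          (by linear_combination (-1 : K) * hz1 i - x i * e3 - y1 i * e6 - z1 i * e9)
        intro l
        fin_cases l
        · exact sub_eq_zero.mp d0
        · exact sub_eq_zero.mp d1
        · exact sub_eq_zero.mp d2
      have hGx : eval x P = 0 := by
        have h := key (RingHom.id K) v
        rw [map_id, map_id, h1] at h
        simp only [RingHom.id_apply] at h
        have hfn : (fun i : Fin 3 => v i 0 + v i 1 * τ + v i 2 * τ ^ 2)
            = fun i => c * x i := by
          funext i; rw [← hx i]; ring
        rw [hfn, homog_eval_mul hP c x] at h
        rcases mul_eq_zero.mp h.symm with hh | hh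
        · exact absurd hh (pow_ne_zero k hc0)
        · exact hh
      have hGy : eval y P = 0 := by
        have h := key φ v
        rw [h2, ← hsdef] at h
        have hfn : (fun i : Fin 3 => v i 0 + v i 1 * s + v i 2 * s ^ 2)
            = fun i => φ c * φ (y i) := by
          funext i; rw [hyy i, ← hy1 i]; ring
        rw [hfn, homog_eval_mul (hP.map φ) (φ c) (fun i => φ (y i)),
          eval_map_comm φ y P] at h
        have h0 : φ (eval y P) = 0 := by
          rcases mul_eq_zero.mp h.symm with hh | hh
          · exact absurd hh (pow_ne_zero k hφc0)
          · exact hh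
        exact hφinj (by rw [h0, map_zero])
      have hGz : eval z P = 0 := by
        have h := key (φ.comp φ) v
        simp only [RingHom.coe_comp, Function.comp_apply] at h
        rw [h3, ← hsdef, ← hudef, ← MvPolynomial.map_map] at h
        have hfn : (fun i : Fin 3 => v i 0 + v i 1 * u + v i 2 * u ^ 2)
            = fun i => φ (φ c) * φ (φ (z i)) := by
          funext i; rw [hzz i, ← hz1 i]; ring
        have hcm : eval (fun i : Fin 3 => φ (φ (z i))) (map φ (map φ P))
            = φ (φ (eval z P)) := by
          simpa using (eval_map_comm φ (fun i => φ (z i)) (map φ P)).trans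
            (congrArg φ (eval_map_comm φ z P))
        rw [hfn, homog_eval_mul ((hP.map φ).map φ) (φ (φ c)) (fun i => φ (φ (z i))),
          hcm] at h
        have h0 : φ (φ (eval z P)) = 0 := by
          rcases mul_eq_zero.mp h.symm with hh | hh
          · exact absurd hh (pow_ne_zero k hφφc0)
          · exact hh
        exact hφinj (hφinj (by rw [h0, map_zero, map_zero]))
      have hvdec : v = ptΓ x + Fmap (ptΓ y) + Fmap (Fmap (ptΓ z)) := by
        funext i l
        simp only [Pi.add_apply]
        rw [hpt, hFm1, hFm2, hyy, hzz]
        exact hdec i l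
      have hnz : ¬(x = 0 ∧ y = 0 ∧ z = 0) := by
        rintro ⟨hx0, hy0, hz0⟩
        apply hv
        funext i l
        have h' : v i l = 0 := by
          rw [hdec i l, ← hyy i, ← hzz i, hx0, hy0, hz0]
          simp
        simpa using h'
      obtain ⟨w0, hw0ne, hw0P⟩ : ∃ w0 : Fin 3 → K, w0 ≠ 0 ∧ eval w0 P = 0 := by
        by_cases hx0 : x = 0
        · by_cases hy0 : y = 0
          · exact ⟨z, fun hz0 => hnz ⟨hx0, hy0, hz0⟩, hGz⟩
          · exact ⟨y, hy0, hGy⟩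
        · exact ⟨x, hx0, hGx⟩
      classical
      refine ⟨if x = 0 then w0 else x, if y = 0 then w0 else y, if z = 0 then w0 else z,
        ?_, ?_, ?_, ?_, ?_, ?_, ?_⟩
      · split_ifs with h
        exacts [hw0ne, h]
      · split_ifs with h
        exacts [hw0ne, h]
      · split_ifs with h
        exacts [hw0ne, h]
      · split_ifs with h
        exacts [hw0P, hGx]
      · split_ifs with h
        exacts [hw0P, hGy]
      · split_ifs with h
        exacts [hw0P, hGz]
      · rw [hvdec]
        refine Submodule.add_mem _ (Submodule.add_mem _ ?_ ?_) ?_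
        · by_cases h : x = 0
          · have h0 : ptΓ x = 0 := by
              funext i l; rw [hpt, h]; simp
            rw [h0]; exact Submodule.zero_mem _
          · apply Submodule.subset_span
            rw [if_neg h]
            exact Set.mem_insert _ _
        · by_cases h : y = 0
          · have h0 : Fmap (ptΓ y) = 0 := by
              funext i l; rw [hFm1, h]; simp
            rw [h0]; exact Submodule.zero_mem _
          · apply Submodule.subset_span
            rw [if_neg h]
            exact Set.mem_insert_of_mem _ (Set.mem_insert _ _)
        · by_cases h : z = 0
          · have h0 : Fmap (Fmap (ptΓ z)) = 0 := by
              funext i l; rw [hFm2, h]; simp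
            rw [h0]; exact Submodule.zero_mem _
          · apply Submodule.subset_span
            rw [if_neg h]
            exact Set.mem_insert_of_mem _ (Set.mem_insert_of_mem _ rfl)
    · rintro ⟨x, y, z, hx0, hy0, hz0, hPx, hPy, hPz, hmem⟩
      obtain ⟨α, v1, hv1, hveq⟩ := Submodule.mem_span_insert.mp hmem
      obtain ⟨β, v2, hv2, hv1eq⟩ := Submodule.mem_span_insert.mp hv1
      obtain ⟨γ, hv2eq⟩ := Submodule.mem_span_singleton.mp hv2
      have hval : ∀ i l, v i l = α * (x i * a l) + β * (φ (y i) * φ (a l))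
          + γ * (φ (φ (z i)) * φ (φ (a l))) := by
        intro i l
        rw [hveq, hv1eq, ← hv2eq]
        simp only [Pi.add_apply, Pi.smul_apply, smul_eq_mul, hpt, hFm1, hFm2]
        ring
      refine ⟨?_, ?_, ?_⟩
      · have h := key (RingHom.id K) v
        rw [map_id, map_id] at h
        simp only [RingHom.id_apply] at h
        rw [h]
        have hfn : (fun i : Fin 3 => v i 0 + v i 1 * τ + v i 2 * τ ^ 2)
            = fun i => c * α * x i := by
          funext i
          rw [hval i 0, hval i 1, hval i 2]
          linear_combination (α * x i) * e1 + (β * φ (y i)) * e4 + (γ * φ (φ (z i))) * e7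
        rw [hfn, homog_eval_mul hP (c * α) x, hPx, mul_zero]
      · have h := key φ v
        rw [← hsdef] at h
        rw [h]
        have hfn : (fun i : Fin 3 => v i 0 + v i 1 * s + v i 2 * s ^ 2)
            = fun i => φ c * β * φ (y i) := by
          funext i
          rw [hval i 0, hval i 1, hval i 2]
          linear_combination (α * x i) * e2 + (β * φ (y i)) * e5 + (γ * φ (φ (z i))) * e8
        rw [hfn, homog_eval_mul (hP.map φ) (φ c * β) (fun i => φ (y i)),
          eval_map_comm φ y P, hPy, map_zero, mul_zero]
      · have h := key (φ.comp φ) v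
        simp only [RingHom.coe_comp, Function.comp_apply] at h
        rw [← hsdef, ← hudef, ← MvPolynomial.map_map, ← MvPolynomial.map_map] at h
        rw [← MvPolynomial.map_map, h]
        have hfn : (fun i : Fin 3 => v i 0 + v i 1 * u + v i 2 * u ^ 2)
            = fun i => φ (φ c) * γ * φ (φ (z i)) := by
          funext i
          rw [hval i 0, hval i 1, hval i 2]
          linear_combination (α * x i) * e3 + (β * φ (y i)) * e6 + (γ * φ (φ (z i))) * e9
        have hcm : eval (fun i : Fin 3 => φ (φ (z i))) (map φ (map φ P))
            = φ (φ (eval z P)) := by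
          simpa using (eval_map_comm φ (fun i => φ (z i)) (map φ P)).trans
            (congrArg φ (eval_map_comm φ z P))
        rw [hfn, homog_eval_mul ((hP.map φ).map φ) (φ (φ c) * γ) (fun i => φ (φ (z i))),
          hcm, hPz, map_zero, map_zero, mul_zero]
end

section
/- Let π̄ be an F_q-subplane of PG(2,q³) (a subplane projectively equivalent to PG(2,q)). In the Bose representation in PG(8,q), the q²+q+1 planes {[X] : X ∈ π}, where [X] = ⟨X, X^q, X^{q²}⟩ ∩ PG(8,q) for X in the copy π of π̄ in the transversal plane Γ, form one system of maximal subspaces of a Segre variety S_{2;2} of PG(8,q). -/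
/-!
Writing the entries of a vector of `K³` in the basis `1, τ, τ²` turns it into a `3 × 3` matrix
over `F`, whose `i`-th row holds the coordinates of the `i`-th entry. For `w ∈ F³` the `K`-line
through `w` then consists of the matrices `w ⊗ u`, since the coordinates of `ρ wᵢ` are `wᵢ` times
those of `ρ`. So the Bose planes of the points of the standard subplane form a system of maximal
subspaces of the Segre variety of rank-one matrices, and a homography `g`, being `K`-linear,
maps `K`-lines to `K`-lines and therefore acts on them through the `F`-linear map it induces
on `F⁹`.
-/

open Module

section

variable {F K ι κ : Type*} [Field F] [Field K] [Algebra F K] [Fintype κ]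

noncomputable def rowCoordEquiv (b : Basis κ F K) : (ι → κ → F) ≃ₗ[F] (ι → K) :=
  LinearEquiv.piCongrRight fun _ => b.equivFun.symm

lemma rowCoordEquiv_apply (b : Basis κ F K) (Q : ι → κ → F) (i : ι) :
    rowCoordEquiv b Q i = ∑ j, Q i j • b j := by
  simp [rowCoordEquiv, Basis.equivFun_symm_apply]

lemma rowCoordEquiv_outer (b : Basis κ F K) (w : ι → F) (u : κ → F) :
    rowCoordEquiv b (fun i j => w i * u j) = b.equivFun.symm u • fun i => algebraMap F K (w i) := by
  funext i
  rw [rowCoordEquiv_apply, Pi.smul_apply, Basis.equivFun_symm_apply, smul_eq_mul, mul_comm,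
    ← Algebra.smul_def, Finset.smul_sum]
  simp only [mul_smul]

lemma range_smul_algebraMap_eq_image (b : Basis κ F K) (w : ι → F) :
    Set.range (fun ρ : K => ρ • fun i => algebraMap F K (w i))
      = rowCoordEquiv b '' {M | ∃ u : κ → F, M = fun i j => w i * u j} := by
  ext Y
  constructor
  · rintro ⟨ρ, rfl⟩
    exact ⟨_, ⟨b.equivFun ρ, rfl⟩, by rw [rowCoordEquiv_outer, b.equivFun.symm_apply_apply]⟩
  · rintro ⟨_, ⟨u, rfl⟩, rfl⟩
    exact ⟨b.equivFun.symm u, (rowCoordEquiv_outer b w u).symm⟩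

/-- Precomposed with transposition so that the `K`-line through `w` comes from the matrices
`u ⊗ w`, as in the standard system of planes of the Segre variety. -/
noncomputable def segreChart (b : Basis κ F K) (g : (ι → K) ≃ₗ[K] (ι → K)) :
    (κ → ι → F) ≃ₗ[F] (ι → κ → F) :=
  (Matrix.transposeLinearEquiv κ ι F F).trans
    ((rowCoordEquiv b).trans ((g.restrictScalars F).trans (rowCoordEquiv b).symm))

lemma preimage_range_smul_eq_segreChart_image (b : Basis κ F K)
    (g : (ι → K) ≃ₗ[K] (ι → K)) (w : ι → F) :
    rowCoordEquiv b ⁻¹' Set.range (fun ρ : K => ρ • g fun i => algebraMap F K (w i))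
      = segreChart b g '' {M | ∃ u : κ → F, M = fun i j => u i * w j} := by
  have hline : Set.range (fun ρ : K => ρ • g fun i => algebraMap F K (w i))
      = g '' Set.range (fun ρ : K => ρ • fun i => algebraMap F K (w i)) := by
    rw [← Set.range_comp]
    simp only [Function.comp_def, map_smul]
  have htranspose : {M : ι → κ → F | ∃ u : κ → F, M = fun i j => w i * u j}
      = (fun M : κ → ι → F => fun i j => M j i) '' {M | ∃ u : κ → F, M = fun i j => u i * w j} := by
    ext M
    constructor
    · rintro ⟨u, rfl⟩
      exact ⟨_, ⟨u, rfl⟩, funext₂ fun i j => mul_comm _ _⟩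
    · rintro ⟨_, ⟨u, rfl⟩, rfl⟩
      exact ⟨u, funext₂ fun i j => mul_comm _ _⟩
  rw [hline, range_smul_algebraMap_eq_image b, htranspose, ← LinearEquiv.image_symm_eq_preimage,
    Set.image_image, Set.image_image, Set.image_image]
  rfl

end

theorem stmt15_general {F K : Type*} [Field F] [Field K] [Algebra F K] (τ : K)
    (b : Module.Basis (Fin 3) F K) (hb : ∀ j : Fin 3, b j = τ ^ (j : ℕ))
    (g : (Fin 3 → K) ≃ₗ[K] (Fin 3 → K))
    (emb : (Fin 3 → F) → Fin 3 → K) (hemb : ∀ w i, emb w i = algebraMap F K (w i))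
    (bose : (Fin 3 → K) → Set (Fin 3 → Fin 3 → F))
    (hbose : ∀ Y, bose Y = {Q : Fin 3 → Fin 3 → F | ∃ ρ : K,
      (fun i => ∑ j : Fin 3, algebraMap F K (Q i j) * τ ^ (j : ℕ)) = ρ • Y}) :
    ∃ h : (Fin 3 → Fin 3 → F) ≃ₗ[F] (Fin 3 → Fin 3 → F),
      {S | ∃ w : Fin 3 → F, w ≠ 0 ∧ S = bose (g (emb w))}
        = {S | ∃ c : Fin 3 → F, c ≠ 0 ∧
            S = (h : (Fin 3 → Fin 3 → F) → Fin 3 → Fin 3 → F) ''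
              {M | ∃ u : Fin 3 → F, M = fun i j => u i * c j}} := by
  have hcoord : ∀ Q : Fin 3 → Fin 3 → F,
      (fun i => ∑ j : Fin 3, algebraMap F K (Q i j) * τ ^ (j : ℕ)) = rowCoordEquiv b Q := by
    intro Q
    funext i
    simp [rowCoordEquiv_apply, hb, Algebra.smul_def]
  have hbose_eq : ∀ Y, bose Y = rowCoordEquiv b ⁻¹' Set.range fun ρ : K => ρ • Y := by
    intro Y
    ext Q
    simp only [hbose, hcoord, Set.mem_ofPred_eq, Set.mem_preimage, Set.mem_range, eq_comm]
  have hplane : ∀ w, bose (g (emb w))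
      = segreChart b g '' {M | ∃ u : Fin 3 → F, M = fun i j => u i * w j} := by
    intro w
    rw [hbose_eq, ← preimage_range_smul_eq_segreChart_image, funext (hemb w)]
  exact ⟨segreChart b g, by simp_rw [hplane]⟩

/-- Let π̄ be an F_q-subplane of PG(2,q³) (the image under a
homography `g` of the standard subplane PG(2,q)).  In the Bose representation
(K³ identified with F_q⁹ via the basis {1,τ,τ²}), the q²+q+1 Bose planes
{Q : X_Q ∈ ⟨X⟩_K} of the points X of π form one system of maximal subspaces of
a Segre variety S_{2;2} of PG(8,q), i.e. they are the image, under a linear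
change of coordinates h of F_q⁹ (= 3×3 matrices), of the standard system of
planes {u ⊗ c : u ∈ F_q³} (c ∈ F_q³ \ {0}) of rank-one matrices. -/
theorem stmt15 {F K : Type*} [Field F] [Fintype F] [Field K] [Algebra F K] (τ : K)
    (b : Module.Basis (Fin 3) F K) (hb : ∀ j : Fin 3, b j = τ ^ (j : ℕ))
    (g : (Fin 3 → K) ≃ₗ[K] (Fin 3 → K))
    (emb : (Fin 3 → F) → Fin 3 → K) (hemb : ∀ w i, emb w i = algebraMap F K (w i))
    (bose : (Fin 3 → K) → Set (Fin 3 → Fin 3 → F))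
    (hbose : ∀ Y, bose Y = {Q : Fin 3 → Fin 3 → F | ∃ ρ : K,
      (fun i => ∑ j : Fin 3, algebraMap F K (Q i j) * τ ^ (j : ℕ)) = ρ • Y}) :
    ∃ h : (Fin 3 → Fin 3 → F) ≃ₗ[F] (Fin 3 → Fin 3 → F),
      {S | ∃ w : Fin 3 → F, w ≠ 0 ∧ S = bose (g (emb w))}
        = {S | ∃ c : Fin 3 → F, c ≠ 0 ∧
            S = (h : (Fin 3 → Fin 3 → F) → Fin 3 → Fin 3 → F) ''
              {M | ∃ u : Fin 3 → F, M = fun i j => u i * c j}} :=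
  stmt15_general τ b hb g emb hemb bose hbose
end

section
/- Let b̄ be an F_q-subline on the line ℓ̄_b of PG(2,q³). In the Bose representation, the q+1 planes of [b] form a 2-regulus (one system of maximal subspaces of a Segre variety S_{1;2}) contained in the 5-space Π_b = ⟨ℓ_b, ℓ_b^q, ℓ_b^{q²}⟩ ∩ PG(8,q). -/
/-!
Writing `E : K ≃ F³` for the coordinates with respect to `1, τ, τ²`, the `F`-linear map
`M ↦ E⁻¹(M₀) P₁ + E⁻¹(M₁) P₂` on `F² ⊗ F³ = F^{2×3}` is injective because `P₁, P₂` are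
`K`-independent, and it sends the plane `{c ⊗ u : u ∈ F³}` onto the `K`-multiples of the point
`c₀ P₁ + c₁ P₂` of the subline, since `E⁻¹(c_i u) = c_i E⁻¹(u)`. Pulling back along the Bose
coordinates turns these `K`-lines into the Bose planes, so the planes of `[b]` are the images of
one system of maximal planes of the Segre variety `S_{1;2}` under a single injective linear map,
and all of them lie in the pull-back of `⟨P₁, P₂⟩_K`.
-/

open Submodule

section CoordLinearCombination

variable {F K V ι n : Type*} [CommSemiring F] [CommSemiring K] [Algebra F K]
  [AddCommMonoid V] [Module K V] [Module F V] [IsScalarTower F K V] [Fintype n]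

def coordLinearCombination (E : K ≃ₗ[F] (ι → F)) (P : n → V) : (n → ι → F) →ₗ[F] V :=
  (Fintype.linearCombination K P).restrictScalars F ∘ₗ
    (LinearEquiv.piCongrRight fun _ => E.symm).toLinearMap

variable (E : K ≃ₗ[F] (ι → F)) (P : n → V)

theorem coordLinearCombination_apply (M : n → ι → F) :
    coordLinearCombination E P M = ∑ i, E.symm (M i) • P i :=
  rfl

theorem coordLinearCombination_injective (hP : LinearIndependent K P) :
    Function.Injective (coordLinearCombination E P) :=
  (linearIndependent_iff_injective_fintypeLinearCombination.1 hP).comp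
    (LinearEquiv.piCongrRight fun _ => E.symm).injective

theorem range_coordLinearCombination_subset :
    Set.range (coordLinearCombination E P) ⊆ span K (Set.range P) := by
  rintro _ ⟨M, rfl⟩
  rw [coordLinearCombination_apply]
  exact sum_mem fun i _ => smul_mem _ _ (subset_span ⟨i, rfl⟩)

theorem coordLinearCombination_tensor (c : n → F) (u : ι → F) :
    coordLinearCombination E P (fun i j => c i * u j)
      = E.symm u • ∑ i, algebraMap F K (c i) • P i := by
  simp only [coordLinearCombination_apply, Finset.smul_sum, smul_smul]
  refine Finset.sum_congr rfl fun i _ => ?_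
  rw [show (fun j => c i * u j) = c i • u from rfl, map_smul, Algebra.smul_def, mul_comm]

theorem image_coordLinearCombination_tensor (c : n → F) :
    coordLinearCombination E P '' {M | ∃ u : ι → F, M = fun i j => c i * u j}
      = (K ∙ ∑ i, algebraMap F K (c i) • P i : Set V) := by
  ext Y
  simp only [Set.mem_image, Set.mem_ofPred_eq, SetLike.mem_coe, mem_span_singleton]
  constructor
  · rintro ⟨_, ⟨u, rfl⟩, rfl⟩
    exact ⟨E.symm u, (coordLinearCombination_tensor E P c u).symm⟩
  · rintro ⟨ρ, rfl⟩
    exact ⟨_, ⟨E ρ, rfl⟩, by rw [coordLinearCombination_tensor, E.symm_apply_apply]⟩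

end CoordLinearCombination

theorem Module.Basis.equivFun_symm_apply_eq_sum_mul {F K ι : Type*} [CommSemiring F]
    [Semiring K] [Algebra F K] [Fintype ι] (b : Module.Basis ι F K) (v : ι → F) :
    b.equivFun.symm v = ∑ j, algebraMap F K (v j) * b j := by
  simp only [Module.Basis.equivFun_symm_apply, Algebra.smul_def]

theorem exists_ne_zero_pair_iff {α : Type*} [Zero α] (p : α → α → Prop) :
    (∃ x y : α, ¬(x = 0 ∧ y = 0) ∧ p x y) ↔ ∃ c : Fin 2 → α, c ≠ 0 ∧ p (c 0) (c 1) := by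
  constructor
  · rintro ⟨x, y, hxy, hp⟩
    refine ⟨![x, y], fun hc => hxy ⟨congrFun hc 0, congrFun hc 1⟩, hp⟩
  · rintro ⟨c, hc, hp⟩
    refine ⟨c 0, c 1, fun ⟨h0, h1⟩ => hc ?_, hp⟩
    ext i
    fin_cases i <;> assumption

theorem stmt16_general {F K : Type*} [Field F] [Field K] [Algebra F K] (τ : K)
    (b : Module.Basis (Fin 3) F K) (hb : ∀ j : Fin 3, b j = τ ^ (j : ℕ))
    (P₁ P₂ : Fin 3 → K) (hind : LinearIndependent K ![P₁, P₂])
    (XQ : (Fin 3 → Fin 3 → F) → Fin 3 → K)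
    (hXQ : ∀ Q i, XQ Q i = ∑ j : Fin 3, algebraMap F K (Q i j) * τ ^ (j : ℕ))
    (bose : (Fin 3 → K) → Set (Fin 3 → Fin 3 → F))
    (hbose : ∀ Y, bose Y = {Q : Fin 3 → Fin 3 → F | ∃ ρ : K, XQ Q = ρ • Y})
    (Pib : Set (Fin 3 → Fin 3 → F))
    (hPib : Pib = {Q | XQ Q ∈ Submodule.span K {P₁, P₂}}) :
    (∀ x y : F, ¬(x = 0 ∧ y = 0) →
      bose (algebraMap F K x • P₁ + algebraMap F K y • P₂) ⊆ Pib) ∧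
    ∃ h : (Fin 2 → Fin 3 → F) →ₗ[F] (Fin 3 → Fin 3 → F),
      Function.Injective h ∧ Set.range h ⊆ Pib ∧
      {S | ∃ x y : F, ¬(x = 0 ∧ y = 0) ∧
          S = bose (algebraMap F K x • P₁ + algebraMap F K y • P₂)}
        = {S | ∃ c : Fin 2 → F, c ≠ 0 ∧
            S = h '' {M | ∃ u : Fin 3 → F, M = fun i j => c i * u j}} := by
  set X : (Fin 3 → Fin 3 → F) ≃ₗ[F] (Fin 3 → K) :=
    LinearEquiv.piCongrRight fun _ => b.equivFun.symm
  have hX : XQ = X := by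
    ext Q i
    simp [X, hXQ, b.equivFun_symm_apply_eq_sum_mul, hb]
  have hbose_preimage : ∀ Y, bose Y = X ⁻¹' (K ∙ Y) := by
    intro Y
    ext Q
    simp [hbose, hX, mem_span_singleton, eq_comm]
  have hPib_preimage : Pib = X ⁻¹' span K {P₁, P₂} := by rw [hPib, hX]; rfl
  set f := coordLinearCombination b.equivFun ![P₁, P₂]
  have hplane : ∀ c : Fin 2 → F,
      bose (algebraMap F K (c 0) • P₁ + algebraMap F K (c 1) • P₂)
        = (X.symm.toLinearMap ∘ₗ f) '' {M | ∃ u : Fin 3 → F, M = fun i j => c i * u j} := by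
    intro c
    rw [LinearMap.coe_comp, Set.image_comp, image_coordLinearCombination_tensor,
      LinearEquiv.coe_coe, X.image_symm_eq_preimage, hbose_preimage, Fin.sum_univ_two]
    rfl
  refine ⟨fun x y _ => ?_, X.symm.toLinearMap ∘ₗ f, ?_, ?_, ?_⟩
  · rw [hbose_preimage, hPib_preimage]
    exact Set.preimage_mono ((span_singleton_le_iff_mem _ _).2 (mem_span_pair.2 ⟨_, _, rfl⟩))
  · exact X.symm.injective.comp (coordLinearCombination_injective _ _ hind)
  · rw [LinearMap.coe_comp, Set.range_comp, LinearEquiv.coe_coe,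
      X.image_symm_eq_preimage, hPib_preimage, ← Matrix.range_cons_cons_empty P₁ P₂ ![]]
    exact Set.preimage_mono (range_coordLinearCombination_subset _ _)
  · ext S
    simpa only [Set.mem_ofPred_eq, ← hplane] using exists_ne_zero_pair_iff _

/-- Let b̄ be an F_q-subline of a line of PG(2,q³): its points are
x P₁ + y P₂ for x, y ∈ F_q (not both 0), where P₁, P₂ are independent points of
K³ (K = F_{q³}).  In the Bose representation (K³ identified with F_q⁹ via the
basis {1,τ,τ²}), the q+1 Bose planes of the points of b form a 2-regulus (one
system of maximal planes of a Segre variety S_{1;2}, i.e. the image under an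
injective linear map h of the standard system {c ⊗ u : u ∈ F_q³}, c ∈ F_q²\{0})
contained in the 5-space Π_b = {Q : X_Q ∈ ⟨P₁,P₂⟩_K} (which is ⟨ℓ,ℓ^q,ℓ^{q²}⟩
∩ PG(8,q)). -/
theorem stmt16 {F K : Type*} [Field F] [Fintype F] [Field K] [Algebra F K] (τ : K)
    (b : Module.Basis (Fin 3) F K) (hb : ∀ j : Fin 3, b j = τ ^ (j : ℕ))
    (P₁ P₂ : Fin 3 → K) (hind : LinearIndependent K ![P₁, P₂])
    (XQ : (Fin 3 → Fin 3 → F) → Fin 3 → K)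
    (hXQ : ∀ Q i, XQ Q i = ∑ j : Fin 3, algebraMap F K (Q i j) * τ ^ (j : ℕ))
    (bose : (Fin 3 → K) → Set (Fin 3 → Fin 3 → F))
    (hbose : ∀ Y, bose Y = {Q : Fin 3 → Fin 3 → F | ∃ ρ : K, XQ Q = ρ • Y})
    (Pib : Set (Fin 3 → Fin 3 → F))
    (hPib : Pib = {Q | XQ Q ∈ Submodule.span K {P₁, P₂}}) :
    (∀ x y : F, ¬(x = 0 ∧ y = 0) →
      bose (algebraMap F K x • P₁ + algebraMap F K y • P₂) ⊆ Pib) ∧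
    ∃ h : (Fin 2 → Fin 3 → F) →ₗ[F] (Fin 3 → Fin 3 → F),
      Function.Injective h ∧ Set.range h ⊆ Pib ∧
      {S | ∃ x y : F, ¬(x = 0 ∧ y = 0) ∧
          S = bose (algebraMap F K x • P₁ + algebraMap F K y • P₂)}
        = {S | ∃ c : Fin 2 → F, c ≠ 0 ∧
            S = h '' {M | ∃ u : Fin 3 → F, M = fun i j => c i * u j}} :=
  stmt16_general τ b hb P₁ P₂ hind XQ hXQ bose hbose Pib hPib
end

section
/- Let b be an F_q-subline of a line ℓ_b of the transversal plane Γ, with conjugacy collineation c_b of order 3 on ℓ_b fixing b pointwise. The 2-regulus [b] of PG(8,q) extends to a unique 2-regulus of PG(8,q³) whose planes are ⟨X, (X^{c_b²})^q, (X^{c_b})^{q²}⟩ for X ∈ ℓ_b; in particular, for X ∈ b this plane is ⟨X, X^q, X^{q²}⟩, the extension of the Bose spread plane of X. -/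
namespace Stmt19Aux

variable {K : Type*} [Field K]

/-- The submodule of `Fin 2 → Fin 3 → K` consisting of matrices `c ⊗ u`. -/
def Splane (c : Fin 2 → K) : Submodule K (Fin 2 → Fin 3 → K) where
  carrier := {M | ∃ u : Fin 3 → K, M = fun i j => c i * u j}
  add_mem' := by
    rintro M N ⟨u, rfl⟩ ⟨v, rfl⟩
    exact ⟨u + v, by funext i j; simp [mul_add]⟩
  zero_mem' := ⟨0, by funext i j; simp⟩
  smul_mem' := by
    rintro t M ⟨u, rfl⟩
    exact ⟨t • u, by funext i j; simp; ring⟩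

lemma mem_Splane {c : Fin 2 → K} {M : Fin 2 → Fin 3 → K} :
    M ∈ Splane c ↔ ∃ u : Fin 3 → K, M = fun i j => c i * u j := Iff.rfl

lemma span_Splane (c : Fin 2 → K) :
    Submodule.span K {M : Fin 2 → Fin 3 → K | ∃ u : Fin 3 → K, M = fun i j => c i * u j}
      = Splane c := Submodule.span_eq (Splane c)

/-- tensor of a 2-vector and a 3-vector -/
def tens (c : Fin 2 → K) (u : Fin 3 → K) : Fin 2 → Fin 3 → K := fun i j => c i * u j

lemma tens_mem (c : Fin 2 → K) (u : Fin 3 → K) : tens c u ∈ Splane c := ⟨u, rfl⟩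

lemma Splane_sup_top : (Splane (![1,0] : Fin 2 → K)) ⊔ Splane ![0,1] = ⊤ := by
  rw [eq_top_iff]
  intro M _
  have : M = tens ![1,0] (M 0) + tens ![0,1] (M 1) := by
    funext i j
    fin_cases i <;> simp [tens]
  rw [this]
  exact Submodule.add_mem_sup (tens_mem _ _) (tens_mem _ _)

lemma nospan1 (d : Fin 2 → K) (hall : ∀ w : Fin 2 → K, ∃ s : K, w = s • d) : False := by
  obtain ⟨s, hs⟩ := hall ![1,0]
  obtain ⟨t, ht⟩ := hall ![0,1]
  have h0 : (1 : K) = s * d 0 := by simpa using congrFun hs 0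
  have h1 : (0 : K) = s * d 1 := by simpa using congrFun hs 1
  have h2 : (0 : K) = t * d 0 := by simpa using congrFun ht 0
  have h3 : (1 : K) = t * d 1 := by simpa using congrFun ht 1
  have : (1 : K) = 0 := by linear_combination h0 + (s * d 0) * h3 - (t * d 0) * h1
  exact one_ne_zero this

theorem reg_unique (h h' : (Fin 2 → Fin 3 → K) →ₗ[K] (Fin 3 → Fin 3 → K))
    (injh : Function.Injective h) (injh' : Function.Injective h')
    (e0 : ∃ d : Fin 2 → K, Submodule.map h (Splane ![1,0]) = Submodule.map h' (Splane d))
    (e1 : ∃ d : Fin 2 → K, Submodule.map h (Splane ![0,1]) = Submodule.map h' (Splane d))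
    (e2 : ∃ d : Fin 2 → K, Submodule.map h (Splane ![1,1]) = Submodule.map h' (Splane d)) :
    {T | ∃ c : Fin 2 → K, c ≠ 0 ∧ T = Submodule.map h (Splane c)}
      = {T | ∃ c : Fin 2 → K, c ≠ 0 ∧ T = Submodule.map h' (Splane c)} := by
  obtain ⟨d₁, hd₁⟩ := e0
  obtain ⟨d₂, hd₂⟩ := e1
  obtain ⟨d₃, hd₃⟩ := e2
  -- range h ≤ range h'
  have hrange : LinearMap.range h ≤ LinearMap.range h' := by
    rw [LinearMap.range_eq_map, ← Splane_sup_top, Submodule.map_sup, hd₁, hd₂]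
    exact sup_le (LinearMap.map_le_range) (LinearMap.map_le_range)
  -- the comparison map g
  set e := LinearEquiv.ofInjective h' injh' with he
  set g : (Fin 2 → Fin 3 → K) →ₗ[K] (Fin 2 → Fin 3 → K) :=
    (e.symm.toLinearMap).comp
      (h.codRestrict (LinearMap.range h') (fun x => hrange (LinearMap.mem_range_self h x))) with hgdef
  have hg : ∀ x, h' (g x) = h x := by
    intro x
    have h1 : e (g x) = ⟨h x, hrange (LinearMap.mem_range_self h x)⟩ := by
      simp only [hgdef, LinearMap.coe_comp, Function.comp_apply, LinearEquiv.coe_coe]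
      rw [e.apply_symm_apply]
      rfl
    have h2 : (↑(e (g x)) : Fin 3 → Fin 3 → K) = h' (g x) := LinearEquiv.ofInjective_apply h' (g x)
    rw [h1] at h2
    exact h2.symm
  have hcomp : ∀ (P : Submodule K (Fin 2 → Fin 3 → K)),
      Submodule.map h' (Submodule.map g P) = Submodule.map h P := by
    intro P
    ext m
    simp only [Submodule.mem_map]
    constructor
    · rintro ⟨y, ⟨x, hx, rfl⟩, rfl⟩; exact ⟨x, hx, (hg x).symm⟩
    · rintro ⟨x, hx, rfl⟩; exact ⟨g x, ⟨x, hx, rfl⟩, hg x⟩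
  have ginj : Function.Injective g := by
    intro x y hxy
    apply injh
    rw [← hg, hxy, hg]
  have gsurj : Function.Surjective g := LinearMap.injective_iff_surjective.mp ginj
  have maph'_inj : Function.Injective (Submodule.map h' :
      Submodule K (Fin 2 → Fin 3 → K) → Submodule K (Fin 3 → Fin 3 → K)) :=
    Submodule.map_injective_of_injective injh'
  have hge0 : Submodule.map g (Splane ![1,0]) = Splane d₁ := maph'_inj (by rw [hcomp, hd₁])
  have hge1 : Submodule.map g (Splane ![0,1]) = Splane d₂ := maph'_inj (by rw [hcomp, hd₂])
  have hge2 : Submodule.map g (Splane ![1,1]) = Splane d₃ := maph'_inj (by rw [hcomp, hd₃])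
  -- element forms
  have g0 : ∀ u : Fin 3 → K, ∃ w, g (tens ![1,0] u) = tens d₁ w := by
    intro u
    have : g (tens ![1,0] u) ∈ Splane d₁ := hge0 ▸ Submodule.mem_map_of_mem (tens_mem _ u)
    exact this
  have g1 : ∀ u : Fin 3 → K, ∃ w, g (tens ![0,1] u) = tens d₂ w := by
    intro u
    have : g (tens ![0,1] u) ∈ Splane d₂ := hge1 ▸ Submodule.mem_map_of_mem (tens_mem _ u)
    exact this
  have g2 : ∀ u : Fin 3 → K, ∃ w, g (tens ![1,1] u) = tens d₃ w := by
    intro u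
    have : g (tens ![1,1] u) ∈ Splane d₃ := hge2 ▸ Submodule.mem_map_of_mem (tens_mem _ u)
    exact this
  have g2' : ∀ w : Fin 3 → K, ∃ u, tens d₃ w = g (tens ![1,1] u) := by
    intro w
    have : tens d₃ w ∈ Submodule.map g (Splane ![1,1]) := hge2 ▸ tens_mem d₃ w
    obtain ⟨m, ⟨u, rfl⟩, hm⟩ := this
    exact ⟨u, hm.symm⟩
  -- d₃ ≠ 0
  have tens_ne : ∀ (c : Fin 2 → K) (u : Fin 3 → K) (i : Fin 2) (j : Fin 3),
      c i ≠ 0 → u j ≠ 0 → tens c u ≠ 0 := by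
    intro c u i j hci huj heq
    have := congrFun (congrFun heq i) j
    simp [tens] at this
    rcases this with h | h
    exacts [hci h, huj h]
  have hd₃ne : d₃ ≠ 0 := by
    intro hzero
    obtain ⟨w, hw⟩ := g2 ![1,0,0]
    have : tens d₃ w = 0 := by subst hzero; funext i j; simp [tens]
    rw [this] at hw
    have h0 : tens (![1,1] : Fin 2 → K) ![1,0,0] = 0 := by
      apply ginj; rw [hw, map_zero]
    exact tens_ne ![1,1] ![1,0,0] 0 0 one_ne_zero one_ne_zero h0
  obtain ⟨i₃, hi₃⟩ : ∃ i, d₃ i ≠ 0 := Function.ne_iff.mp hd₃ne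
  -- spanning of d₁, d₂
  have span12 : ∀ w : Fin 2 → K, ∃ s t : K, w = s • d₁ + t • d₂ := by
    intro w
    have htop : Splane d₁ ⊔ Splane d₂ = ⊤ := by
      rw [← hge0, ← hge1, ← Submodule.map_sup, Splane_sup_top, Submodule.map_top,
        LinearMap.range_eq_top.mpr gsurj]
    have hmem : tens w ![1,0,0] ∈ Splane d₁ ⊔ Splane d₂ := htop ▸ Submodule.mem_top
    rw [Submodule.mem_sup] at hmem
    obtain ⟨y, ⟨u, rfl⟩, z, ⟨v, rfl⟩, hyz⟩ := hmem
    refine ⟨u 0, v 0, ?_⟩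
    funext i
    have := congrFun (congrFun hyz i) 0
    simp [tens] at this ⊢
    linear_combination this.symm
  -- linear independence of d₁ d₂
  have indep : ∀ s t : K, s • d₁ + t • d₂ = 0 → s = 0 ∧ t = 0 := by
    intro s t hst
    by_cases hs : s = 0
    · refine ⟨hs, ?_⟩
      by_contra ht
      have hd2 : d₂ = 0 := by
        have : t • d₂ = 0 := by rw [hs] at hst; simpa using hst
        exact (smul_eq_zero.mp this).resolve_left ht
      exact nospan1 d₁ (fun w => by
        obtain ⟨s', t', hw⟩ := span12 w
        exact ⟨s', by rw [hw, hd2]; simp⟩)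
    · exfalso
      have hd1 : d₁ = (-(s⁻¹ * t)) • d₂ := by
        have : s • d₁ = -(t • d₂) := by linear_combination (norm := module) hst
        calc d₁ = s⁻¹ • (s • d₁) := by rw [smul_smul, inv_mul_cancel₀ hs, one_smul]
        _ = (-(s⁻¹ * t)) • d₂ := by rw [this, smul_neg, smul_smul]; rw [neg_smul]
      exact nospan1 d₂ (fun w => by
        obtain ⟨s', t', hw⟩ := span12 w
        refine ⟨s' * (-(s⁻¹ * t)) + t', ?_⟩
        rw [hw, hd1, smul_smul, add_smul])
  -- write d₃ in the basis
  obtain ⟨α, β, hde⟩ := span12 d₃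
  -- α ≠ 0 and β ≠ 0
  have inf01 : ∀ (u v : Fin 3 → K), tens (![1,0] : Fin 2 → K) u = tens ![1,1] v → u = 0 := by
    intro u v huv
    have h1 : ∀ j, (0 : K) = v j := by
      intro j
      simpa [tens] using congrFun (congrFun huv 1) j
    have h2 : ∀ j, u j = v j := by
      intro j
      simpa [tens] using congrFun (congrFun huv 0) j
    funext j
    rw [h2 j, ← h1 j]; rfl
  have inf10 : ∀ (u v : Fin 3 → K), tens (![0,1] : Fin 2 → K) u = tens ![1,1] v → u = 0 := by
    intro u v huv
    have h1 : ∀ j, (0 : K) = v j := by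
      intro j
      simpa [tens] using congrFun (congrFun huv 0) j
    have h2 : ∀ j, u j = v j := by
      intro j
      simpa [tens] using congrFun (congrFun huv 1) j
    funext j
    rw [h2 j, ← h1 j]; rfl
  have hβ : β ≠ 0 := by
    intro hβ0
    -- then d₃ = α • d₁, so Splane d₃ ≤ Splane d₁ = g '' Splane ![1,0]
    have hd3 : d₃ = α • d₁ := by rw [hde, hβ0]; simp
    have hmem : tens d₃ ![1,0,0] ∈ Splane d₁ := by
      refine ⟨α • ![1,0,0], ?_⟩
      funext i j
      simp [tens, hd3]; ring
    rw [← hge0] at hmem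
    obtain ⟨m, ⟨u', rfl⟩, hm⟩ := hmem
    obtain ⟨u, hu⟩ := g2' ![1,0,0]
    replace hm : g (tens ![1,0] u') = tens d₃ ![1,0,0] := hm
    have hgg : tens (![1,0] : Fin 2 → K) u' = tens ![1,1] u := ginj (hm.trans hu)
    have hu'0 : u' = 0 := inf01 u' u hgg
    have hzz : tens (![1,0] : Fin 2 → K) (0 : Fin 3 → K) = 0 := by funext i j; simp [tens]
    have hz3 : tens d₃ (![1,0,0] : Fin 3 → K) = 0 := by rw [← hm, hu'0, hzz, map_zero]
    exact tens_ne d₃ ![1,0,0] i₃ 0 hi₃ one_ne_zero hz3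
  have hα : α ≠ 0 := by
    intro hα0
    have hd3 : d₃ = β • d₂ := by rw [hde, hα0]; simp
    have hmem : tens d₃ ![1,0,0] ∈ Splane d₂ := by
      refine ⟨β • ![1,0,0], ?_⟩
      funext i j
      simp [tens, hd3]; ring
    rw [← hge1] at hmem
    obtain ⟨m, ⟨u', rfl⟩, hm⟩ := hmem
    obtain ⟨u, hu⟩ := g2' ![1,0,0]
    replace hm : g (tens ![0,1] u') = tens d₃ ![1,0,0] := hm
    have hgg : tens (![0,1] : Fin 2 → K) u' = tens ![1,1] u := ginj (hm.trans hu)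
    have hu'0 : u' = 0 := inf10 u' u hgg
    have hzz : tens (![0,1] : Fin 2 → K) (0 : Fin 3 → K) = 0 := by funext i j; simp [tens]
    have hz3 : tens d₃ (![1,0,0] : Fin 3 → K) = 0 := by rw [← hm, hu'0, hzz, map_zero]
    exact tens_ne d₃ ![1,0,0] i₃ 0 hi₃ one_ne_zero hz3
  -- key decomposition
  have key : ∀ u : Fin 3 → K, ∃ w : Fin 3 → K,
      g (tens ![1,0] u) = tens d₁ (α • w) ∧ g (tens ![0,1] u) = tens d₂ (β • w) ∧
      g (tens ![1,1] u) = tens d₃ w := by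
    intro u
    obtain ⟨B, hB⟩ := g0 u
    obtain ⟨C, hC⟩ := g1 u
    obtain ⟨D, hD⟩ := g2 u
    have hsplit : tens (![1,1] : Fin 2 → K) u = tens ![1,0] u + tens ![0,1] u := by
      funext i j
      fin_cases i <;> simp [tens]
    have heq : tens d₁ B + tens d₂ C = tens d₃ D := by
      rw [← hB, ← hC, ← map_add, ← hsplit, hD]
    have hcoord : ∀ j, (B j - α * D j) • d₁ + (C j - β * D j) • d₂ = 0 := by
      intro j
      funext i
      have h1 := congrFun (congrFun heq i) j
      have h2 : d₃ i = α * d₁ i + β * d₂ i := by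
        rw [hde]; simp
      simp [tens] at h1 ⊢
      linear_combination h1 + D j * h2
    have hBD : ∀ j, B j = α * D j := fun j => sub_eq_zero.mp ((indep _ _ (hcoord j)).1)
    have hCD : ∀ j, C j = β * D j := fun j => sub_eq_zero.mp ((indep _ _ (hcoord j)).2)
    refine ⟨D, ?_, ?_, hD⟩
    · rw [hB]; funext i j; simp [tens, hBD j]
    · rw [hC]; funext i j; simp [tens, hCD j]
  choose D hD1 hD2 hD3 using key
  have Dsurj : ∀ w : Fin 3 → K, ∃ u, D u = w := by
    intro w
    obtain ⟨u, hu⟩ := g2' w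
    rw [hD3 u] at hu
    refine ⟨u, ?_⟩
    funext j
    have h3 := congrFun (congrFun hu i₃) j
    replace h3 : d₃ i₃ * w j = d₃ i₃ * (D u) j := h3
    exact (mul_left_cancel₀ hi₃ h3).symm
  -- γ
  set γ : (Fin 2 → K) → (Fin 2 → K) := fun c => (c 0 * α) • d₁ + (c 1 * β) • d₂ with hγdef
  have gtens : ∀ (c : Fin 2 → K) (u : Fin 3 → K), g (tens c u) = tens (γ c) (D u) := by
    intro c u
    have hsplit : tens c u = c 0 • tens ![1,0] u + c 1 • tens ![0,1] u := by
      funext i j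
      fin_cases i <;> simp [tens]
    rw [hsplit, map_add, map_smul, map_smul, hD1 u, hD2 u]
    funext i j
    simp [tens, hγdef]
    ring
  have gplane : ∀ c : Fin 2 → K, Submodule.map g (Splane c) = Splane (γ c) := by
    intro c
    ext m
    simp only [Submodule.mem_map]
    constructor
    · rintro ⟨x, ⟨u, rfl⟩, rfl⟩
      exact ⟨D u, gtens c u⟩
    · rintro ⟨u, rfl⟩
      obtain ⟨v, hv⟩ := Dsurj u
      exact ⟨tens c v, tens_mem c v, by rw [gtens c v, hv]; rfl⟩
  have γinj0 : ∀ c : Fin 2 → K, γ c = 0 → c = 0 := by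
    intro c hc
    have := indep (c 0 * α) (c 1 * β) hc
    funext i
    fin_cases i
    · exact (mul_eq_zero.mp this.1).resolve_right hα
    · exact (mul_eq_zero.mp this.2).resolve_right hβ
  have γsurj : ∀ d : Fin 2 → K, ∃ c : Fin 2 → K, γ c = d ∧ (d ≠ 0 → c ≠ 0) := by
    intro d
    obtain ⟨s, t, hd⟩ := span12 d
    refine ⟨![s * α⁻¹, t * β⁻¹], ?_, ?_⟩
    · rw [hγdef]
      simp only [Matrix.cons_val_zero, Matrix.cons_val_one, Matrix.head_cons]
      rw [hd]
      congr 1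
      · rw [mul_assoc, inv_mul_cancel₀ hα, mul_one]
      · rw [mul_assoc, inv_mul_cancel₀ hβ, mul_one]
    · intro hdne hc0
      apply hdne
      rw [hd]
      have h0 : s * α⁻¹ = 0 := congrFun hc0 0
      have h1 : t * β⁻¹ = 0 := congrFun hc0 1
      have hs : s = 0 := by
        rcases mul_eq_zero.mp h0 with h | h
        · exact h
        · exact absurd (inv_eq_zero.mp h) hα
      have ht : t = 0 := by
        rcases mul_eq_zero.mp h1 with h | h
        · exact h
        · exact absurd (inv_eq_zero.mp h) hβ
      rw [hs, ht]; simp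
  -- conclude
  ext T
  simp only [Set.mem_setOf_eq]
  constructor
  · rintro ⟨c, hc, rfl⟩
    refine ⟨γ c, fun h0 => hc (γinj0 c h0), ?_⟩
    rw [← hcomp, gplane]
  · rintro ⟨d, hd, rfl⟩
    obtain ⟨c, hγc, hcne⟩ := γsurj d
    refine ⟨c, hcne hd, ?_⟩
    rw [← hcomp, gplane, hγc]

end Stmt19Aux

open Stmt19Aux

set_option maxHeartbeats 2000000 in
/-- Let b be an F_q-subline of the line ℓ_b = ⟨P₁,P₂⟩ of the
transversal plane Γ = ⟨A₀,A₁,A₂⟩, with b the set of F_q-rational points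
xP₁+yP₂ (x,y ∈ F_q); in these coordinates the conjugacy collineation c_b of
ℓ_b fixing b pointwise acts as xP₁+yP₂ ↦ x^qP₁+y^qP₂.  The 2-regulus [b] of
PG(8,q) extends to a unique 2-regulus of PG(8,q³) whose planes are
⟨X, (X^{c_b²})^q, (X^{c_b})^{q²}⟩ = ⟨xP₁+yP₂, xP₁^q+yP₂^q, xP₁^{q²}+yP₂^{q²}⟩
for X = xP₁+yP₂ ∈ ℓ_b; in particular, for X ∈ b (x,y ∈ F_q) this plane is
⟨X, X^q, X^{q²}⟩, the extension of the Bose spread plane of X.  A 2-regulus of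
PG(8,q³) is the image under an injective linear map of the standard system of
maximal planes of a Segre variety S_{1;2}. -/
theorem stmt19 {F K : Type*} [Field F] [Fintype F] [Field K] [Fintype K] [Algebra F K]
    (p n q : ℕ) [Fact p.Prime] [CharP K p] [ExpChar K p]
    (hq : q = p ^ n) (hF : Fintype.card F = q) (hK : Fintype.card K = q ^ 3)
    (t₀ t₁ t₂ : F) (τ : K)
    (hirr : Irreducible (Polynomial.X ^ 3 - Polynomial.C t₂ * Polynomial.X ^ 2
      - Polynomial.C t₁ * Polynomial.X - Polynomial.C t₀))
    (hroot : τ ^ 3 = algebraMap F K t₀ + algebraMap F K t₁ * τ + algebraMap F K t₂ * τ ^ 2)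
    (a : Fin 3 → K)
    (ha : a = ![algebraMap F K t₁ + algebraMap F K t₂ * τ - τ ^ 2,
      algebraMap F K t₂ - τ, -1])
    (A : Fin 3 → Fin 3 → Fin 3 → K)
    (hA : ∀ i j l, A i j l = if j = i then a l else 0)
    (φ1 φ2 : K →+* K) (hφ1 : φ1 = iterateFrobenius K p n)
    (hφ2 : φ2 = iterateFrobenius K p (2 * n))
    (Fq1 Fq2 : (Fin 3 → Fin 3 → K) → Fin 3 → Fin 3 → K)
    (hFq1 : ∀ v j l, Fq1 v j l = φ1 (v j l))
    (hFq2 : ∀ v j l, Fq2 v j l = φ2 (v j l))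
    (p₁ p₂ : Fin 3 → K) (hp : LinearIndependent K ![p₁, p₂])
    (P₁ P₂ : Fin 3 → Fin 3 → K)
    (hP₁ : P₁ = p₁ 0 • A 0 + p₁ 1 • A 1 + p₁ 2 • A 2)
    (hP₂ : P₂ = p₂ 0 • A 0 + p₂ 1 • A 1 + p₂ 2 • A 2)
    (pl : K → K → Submodule K (Fin 3 → Fin 3 → K))
    (hpl : ∀ x y : K, pl x y = Submodule.span K
      {x • P₁ + y • P₂,
       Fq1 (φ2 x • P₁ + φ2 y • P₂),
       Fq2 (φ1 x • P₁ + φ1 y • P₂)})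
    (Fam : Set (Submodule K (Fin 3 → Fin 3 → K)))
    (hFam : Fam = {S | ∃ x y : K, ¬(x = 0 ∧ y = 0) ∧ S = pl x y})
    (isReg : Set (Submodule K (Fin 3 → Fin 3 → K)) → Prop)
    (hisReg : ∀ R, isReg R ↔ ∃ h : (Fin 2 → Fin 3 → K) →ₗ[K] (Fin 3 → Fin 3 → K),
      Function.Injective h ∧
      R = {S | ∃ c : Fin 2 → K, c ≠ 0 ∧
        S = Submodule.map h (Submodule.span K
          {M : Fin 2 → Fin 3 → K | ∃ u : Fin 3 → K, M = fun i j => c i * u j})}) :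
    (∀ x y : F, pl (algebraMap F K x) (algebraMap F K y)
        = Submodule.span K
          {algebraMap F K x • P₁ + algebraMap F K y • P₂,
           Fq1 (algebraMap F K x • P₁ + algebraMap F K y • P₂),
           Fq2 (algebraMap F K x • P₁ + algebraMap F K y • P₂)}) ∧
    isReg Fam ∧
    (∀ x y : F, ¬(x = 0 ∧ y = 0) →
      Submodule.span K
        {algebraMap F K x • P₁ + algebraMap F K y • P₂,
         Fq1 (algebraMap F K x • P₁ + algebraMap F K y • P₂),
         Fq2 (algebraMap F K x • P₁ + algebraMap F K y • P₂)} ∈ Fam) ∧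
    (∀ R : Set (Submodule K (Fin 3 → Fin 3 → K)), isReg R →
      (∀ x y : F, ¬(x = 0 ∧ y = 0) →
        Submodule.span K
          {algebraMap F K x • P₁ + algebraMap F K y • P₂,
           Fq1 (algebraMap F K x • P₁ + algebraMap F K y • P₂),
           Fq2 (algebraMap F K x • P₁ + algebraMap F K y • P₂)} ∈ R) →
      R = Fam) := by
  classical
  -- basic Frobenius facts
  have hf : ∀ x : F, x ^ (p ^ n) = x := fun x => by rw [← hq, ← hF, FiniteField.pow_card]
  have hXfix1 : ∀ x : F, φ1 (algebraMap F K x) = algebraMap F K x := by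
    intro x
    rw [hφ1, iterateFrobenius_def, ← map_pow, hf]
  have hXfix2 : ∀ x : F, φ2 (algebraMap F K x) = algebraMap F K x := by
    intro x
    rw [hφ2, iterateFrobenius_def, ← map_pow, two_mul, pow_add, pow_mul, hf, hf]
  have hz3 : ∀ z : K, z ^ (p ^ (3 * n)) = z := by
    intro z
    have hc : p ^ (3 * n) = Fintype.card K := by
      rw [hK, hq, ← pow_mul, mul_comm n 3]
    rw [hc, FiniteField.pow_card]
  have h12 : ∀ z : K, φ1 (φ2 z) = z := by
    intro z
    rw [hφ1, hφ2, iterateFrobenius_def, iterateFrobenius_def, ← pow_mul, ← pow_add]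
    have h : 2 * n + n = 3 * n := by ring
    rw [h, hz3]
  have h21 : ∀ z : K, φ2 (φ1 z) = z := by
    intro z
    rw [hφ1, hφ2, iterateFrobenius_def, iterateFrobenius_def, ← pow_mul, ← pow_add]
    have h : n + 2 * n = 3 * n := by ring
    rw [h, hz3]
  have h22 : ∀ z : K, φ2 (φ2 z) = φ1 z := by
    intro z
    rw [hφ1, hφ2, iterateFrobenius_def, iterateFrobenius_def, iterateFrobenius_def,
      ← pow_mul, ← pow_add]
    have h : 2 * n + 2 * n = 3 * n + n := by ring
    rw [h, pow_add, pow_mul, hz3]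
  have hq2 : 1 < q := by rw [← hF]; exact Fintype.one_lt_card
  -- τ is not fixed by Frobenius
  have htau : φ1 τ ≠ τ := by
    intro hfix
    have hτq : τ ^ q = τ := by
      rw [hφ1, iterateFrobenius_def] at hfix
      rw [hq]; exact hfix
    set Pq : Polynomial K := Polynomial.X ^ q - Polynomial.X with hPq
    have hdegq : Pq.natDegree = q := by
      rw [hPq, Polynomial.natDegree_sub_eq_left_of_natDegree_lt, Polynomial.natDegree_X_pow]
      rw [Polynomial.natDegree_X, Polynomial.natDegree_X_pow]; exact hq2
    have hPqne : Pq ≠ 0 := by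
      intro h0
      rw [h0, Polynomial.natDegree_zero] at hdegq
      omega
    by_cases hτmem : τ ∈ Finset.univ.image (algebraMap F K)
    · -- τ rational: contradiction with irreducibility
      obtain ⟨t, _, ht⟩ := Finset.mem_image.mp hτmem
      have hroott : t ^ 3 - t₂ * t ^ 2 - t₁ * t - t₀ = 0 := by
        have h2 : algebraMap F K (t ^ 3 - t₂ * t ^ 2 - t₁ * t - t₀) = 0 := by
          rw [map_sub, map_sub, map_sub, map_pow, map_mul, map_mul, map_pow]
          have h3 := hroot
          rw [← ht] at h3
          linear_combination h3
        exact (map_eq_zero_iff _ (algebraMap F K).injective).mp h2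
      have hdvd : (Polynomial.X - Polynomial.C t) ∣
          (Polynomial.X ^ 3 - Polynomial.C t₂ * Polynomial.X ^ 2
            - Polynomial.C t₁ * Polynomial.X - Polynomial.C t₀) := by
        rw [Polynomial.dvd_iff_isRoot]
        show Polynomial.eval t _ = 0
        simp only [Polynomial.eval_sub, Polynomial.eval_pow, Polynomial.eval_mul,
          Polynomial.eval_X, Polynomial.eval_C]
        linear_combination hroott
      obtain ⟨u, hu⟩ := hdvd
      rcases hirr.isUnit_or_isUnit hu with h | h
      · exact Polynomial.not_isUnit_X_sub_C t h
      · have hdeg3 : (Polynomial.X ^ 3 - Polynomial.C t₂ * Polynomial.X ^ 2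
            - Polynomial.C t₁ * Polynomial.X - Polynomial.C t₀ : Polynomial F).natDegree = 3 := by
          compute_degree!
        have hu0 : u.natDegree = 0 := Polynomial.natDegree_eq_zero_of_isUnit h
        have hXne : (Polynomial.X - Polynomial.C t : Polynomial F) ≠ 0 :=
          Polynomial.X_sub_C_ne_zero t
        have hune : u ≠ 0 := by
          intro h0
          rw [h0, mul_zero] at hu
          rw [hu, Polynomial.natDegree_zero] at hdeg3
          omega
        have hnd := Polynomial.natDegree_mul hXne hune
        rw [← hu, hdeg3, Polynomial.natDegree_X_sub_C, hu0] at hnd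
        omega
    · -- counting contradiction
      set T : Finset K := insert τ (Finset.univ.image (algebraMap F K)) with hT
      have hTcard : T.card = q + 1 := by
        rw [hT, Finset.card_insert_of_notMem hτmem,
          Finset.card_image_of_injective _ (algebraMap F K).injective, Finset.card_univ, hF]
      have hsub : T ⊆ Pq.roots.toFinset := by
        intro z hz
        rw [Multiset.mem_toFinset, Polynomial.mem_roots']
        refine ⟨hPqne, ?_⟩
        rw [hT, Finset.mem_insert] at hz
        rcases hz with rfl | hz
        · show Polynomial.eval z Pq = 0
          rw [hPq]
          simp only [Polynomial.eval_sub, Polynomial.eval_pow, Polynomial.eval_X]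
          rw [hτq, sub_self]
        · obtain ⟨t, _, rfl⟩ := Finset.mem_image.mp hz
          show Polynomial.eval _ Pq = 0
          rw [hPq]
          simp only [Polynomial.eval_sub, Polynomial.eval_pow, Polynomial.eval_X]
          rw [← map_pow, ← hF, FiniteField.pow_card, sub_self]
      have hle := (Finset.card_le_card hsub).trans
        ((Multiset.toFinset_card_le _).trans (Pq.card_roots'))
      rw [hTcard, hdegq] at hle
      omega
  have hs2ne : φ2 τ ≠ τ := by
    intro h
    exact htau (by rw [← h22 τ, h, h])
  have hs21 : φ2 τ ≠ φ1 τ := by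
    intro h
    apply htau
    calc φ1 τ = φ2 (φ2 τ) := (h22 τ).symm
    _ = φ2 (φ1 τ) := by rw [h]
    _ = τ := h21 τ
  -- entries of a
  have ha0 : a 0 = algebraMap F K t₁ + algebraMap F K t₂ * τ - τ ^ 2 := by rw [ha]; simp
  have ha1 : a 1 = algebraMap F K t₂ - τ := by rw [ha]; simp
  have ha2 : a 2 = -1 := by rw [ha]; simp
  -- the triple (a, φ1 a, φ2 a) is independent
  have tripleIndep : ∀ α β γ : K,
      (∀ l, α * a l + β * φ1 (a l) + γ * φ2 (a l) = 0) → α = 0 ∧ β = 0 ∧ γ = 0 := by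
    intro α β γ hl
    have e0 : α + β + γ = 0 := by
      have h2 := hl 2
      rw [ha2, map_neg, map_one, map_neg, map_one] at h2
      linear_combination -h2
    have e1 : α * τ + β * φ1 τ + γ * φ2 τ = 0 := by
      have h1 := hl 1
      rw [ha1, map_sub, map_sub, hXfix1, hXfix2] at h1
      linear_combination algebraMap F K t₂ * e0 - h1
    have e2 : α * τ ^ 2 + β * (φ1 τ) ^ 2 + γ * (φ2 τ) ^ 2 = 0 := by
      have h0 := hl 0
      rw [ha0, map_sub, map_add, map_mul, map_pow, map_sub, map_add, map_mul, map_pow,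
        hXfix1, hXfix1, hXfix2, hXfix2] at h0
      linear_combination algebraMap F K t₁ * e0 + algebraMap F K t₂ * e1 - h0
    have hγ : γ * ((φ2 τ - τ) * (φ2 τ - φ1 τ)) = 0 := by
      linear_combination e2 - (φ1 τ + τ) * e1 + (φ1 τ * τ) * e0
    have hγ0 : γ = 0 := by
      rcases mul_eq_zero.mp hγ with h | h
      · exact h
      · rcases mul_eq_zero.mp h with h' | h'
        · exact absurd (sub_eq_zero.mp h') hs2ne
        · exact absurd (sub_eq_zero.mp h') hs21
    have hβ0 : β = 0 := by
      have hb : β * (φ1 τ - τ) = 0 := by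
        linear_combination e1 - τ * e0 - (φ2 τ - τ) * hγ0
      rcases mul_eq_zero.mp hb with h | h
      · exact h
      · exact absurd (sub_eq_zero.mp h) htau
    refine ⟨?_, hβ0, hγ0⟩
    linear_combination e0 - hβ0 - hγ0
  -- entries of the six matrices
  have hP1e : ∀ j l, P₁ j l = p₁ j * a l := by
    intro j l
    rw [hP₁]
    simp only [Pi.add_apply, Pi.smul_apply, smul_eq_mul, hA]
    fin_cases j <;> simp
  have hP2e : ∀ j l, P₂ j l = p₂ j * a l := by
    intro j l
    rw [hP₂]
    simp only [Pi.add_apply, Pi.smul_apply, smul_eq_mul, hA]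
    fin_cases j <;> simp
  have hQ1e : ∀ j l, Fq1 P₁ j l = φ1 (p₁ j) * φ1 (a l) := by
    intro j l; rw [hFq1, hP1e, map_mul]
  have hQ2e : ∀ j l, Fq1 P₂ j l = φ1 (p₂ j) * φ1 (a l) := by
    intro j l; rw [hFq1, hP2e, map_mul]
  have hR1e : ∀ j l, Fq2 P₁ j l = φ2 (p₁ j) * φ2 (a l) := by
    intro j l; rw [hFq2, hP1e, map_mul]
  have hR2e : ∀ j l, Fq2 P₂ j l = φ2 (p₂ j) * φ2 (a l) := by
    intro j l; rw [hFq2, hP2e, map_mul]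
  -- independence of the six matrices
  have pairp := LinearIndependent.pair_iff.mp hp
  have sixIndep : ∀ x1 x2 y1 y2 z1 z2 : K,
      x1 • P₁ + x2 • P₂ + y1 • Fq1 P₁ + y2 • Fq1 P₂ + z1 • Fq2 P₁ + z2 • Fq2 P₂ = 0 →
      x1 = 0 ∧ x2 = 0 ∧ y1 = 0 ∧ y2 = 0 ∧ z1 = 0 ∧ z2 = 0 := by
    intro x1 x2 y1 y2 z1 z2 heq
    have hj : ∀ j, (x1 * p₁ j + x2 * p₂ j) = 0 ∧ (y1 * φ1 (p₁ j) + y2 * φ1 (p₂ j)) = 0 ∧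
        (z1 * φ2 (p₁ j) + z2 * φ2 (p₂ j)) = 0 := by
      intro j
      apply tripleIndep
      intro l
      have h := congrFun (congrFun heq j) l
      simp only [Pi.add_apply, Pi.smul_apply, smul_eq_mul, Pi.zero_apply] at h
      rw [hP1e, hP2e, hQ1e, hQ2e, hR1e, hR2e] at h
      linear_combination h
    have hx : x1 = 0 ∧ x2 = 0 := by
      apply pairp
      funext j
      simp only [Pi.add_apply, Pi.smul_apply, smul_eq_mul, Pi.zero_apply]
      exact (hj j).1
    have φ1surj : Function.Surjective φ1 := Finite.injective_iff_surjective.mp φ1.injective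
    have φ2surj : Function.Surjective φ2 := Finite.injective_iff_surjective.mp φ2.injective
    obtain ⟨u1, rfl⟩ := φ1surj y1
    obtain ⟨u2, rfl⟩ := φ1surj y2
    obtain ⟨v1, rfl⟩ := φ2surj z1
    obtain ⟨v2, rfl⟩ := φ2surj z2
    have hy : u1 = 0 ∧ u2 = 0 := by
      apply pairp
      funext j
      apply φ1.injective
      simp only [Pi.add_apply, Pi.smul_apply, smul_eq_mul, Pi.zero_apply, map_add, map_mul,
        map_zero]
      exact (hj j).2.1
    have hz : v1 = 0 ∧ v2 = 0 := by
      apply pairp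
      funext j
      apply φ2.injective
      simp only [Pi.add_apply, Pi.smul_apply, smul_eq_mul, Pi.zero_apply, map_add, map_mul,
        map_zero]
      exact (hj j).2.2
    refine ⟨hx.1, hx.2, ?_, ?_, ?_, ?_⟩
    · rw [hy.1, map_zero]
    · rw [hy.2, map_zero]
    · rw [hz.1, map_zero]
    · rw [hz.2, map_zero]
  -- pl rewritten
  have hLpl : ∀ x y : K, pl x y = Submodule.span K
      {x • P₁ + y • P₂, x • Fq1 P₁ + y • Fq1 P₂, x • Fq2 P₁ + y • Fq2 P₂} := by
    intro x y
    have hA1 : Fq1 (φ2 x • P₁ + φ2 y • P₂) = x • Fq1 P₁ + y • Fq1 P₂ := by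
      funext j l
      simp only [hFq1, Pi.add_apply, Pi.smul_apply, smul_eq_mul, map_add, map_mul, h12]
    have hA2 : Fq2 (φ1 x • P₁ + φ1 y • P₂) = x • Fq2 P₁ + y • Fq2 P₂ := by
      funext j l
      simp only [hFq2, Pi.add_apply, Pi.smul_apply, smul_eq_mul, map_add, map_mul, h21]
    rw [hpl, hA1, hA2]
  -- the linear map
  set hmap : (Fin 2 → Fin 3 → K) →ₗ[K] (Fin 3 → Fin 3 → K) :=
    { toFun := fun M => M 0 0 • P₁ + M 1 0 • P₂ + M 0 1 • Fq1 P₁ + M 1 1 • Fq1 P₂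
        + M 0 2 • Fq2 P₁ + M 1 2 • Fq2 P₂
      map_add' := by
        intro M N
        funext j l
        simp only [Pi.add_apply, Pi.smul_apply, smul_eq_mul]
        ring
      map_smul' := by
        intro c M
        funext j l
        simp only [Pi.smul_apply, Pi.add_apply, smul_eq_mul, RingHom.id_apply]
        ring } with hmapdef
  have hmapinj : Function.Injective hmap := by
    intro M N hMN
    have h0 : hmap (M - N) = 0 := by rw [map_sub, hMN, sub_self]
    obtain ⟨e1, e2, e3, e4, e5, e6⟩ := sixIndep ((M - N) 0 0) ((M - N) 1 0) ((M - N) 0 1)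
      ((M - N) 1 1) ((M - N) 0 2) ((M - N) 1 2) h0
    have hsub : M - N = 0 := by
      funext i j
      fin_cases i <;> fin_cases j
      exacts [e1, e3, e5, e2, e4, e6]
    exact sub_eq_zero.mp hsub
  have hmaptens : ∀ (c : Fin 2 → K) (u : Fin 3 → K), hmap (tens c u) =
      u 0 • (c 0 • P₁ + c 1 • P₂) + u 1 • (c 0 • Fq1 P₁ + c 1 • Fq1 P₂)
        + u 2 • (c 0 • Fq2 P₁ + c 1 • Fq2 P₂) := by
    intro c u
    show (c 0 * u 0) • P₁ + (c 1 * u 0) • P₂ + (c 0 * u 1) • Fq1 P₁ + (c 1 * u 1) • Fq1 P₂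
        + (c 0 * u 2) • Fq2 P₁ + (c 1 * u 2) • Fq2 P₂ = _
    funext j l
    simp only [Pi.add_apply, Pi.smul_apply, smul_eq_mul]
    ring
  -- the plane correspondence
  have hplane : ∀ c : Fin 2 → K, Submodule.map hmap (Splane c) = pl (c 0) (c 1) := by
    intro c
    rw [hLpl]
    apply le_antisymm
    · intro m hm
      rw [Submodule.mem_map] at hm
      obtain ⟨x, ⟨u, rfl⟩, rfl⟩ := hm
      have hv : hmap (fun i j => c i * u j) =
          u 0 • (c 0 • P₁ + c 1 • P₂) + u 1 • (c 0 • Fq1 P₁ + c 1 • Fq1 P₂)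
            + u 2 • (c 0 • Fq2 P₁ + c 1 • Fq2 P₂) := hmaptens c u
      rw [hv]
      refine Submodule.add_mem _ (Submodule.add_mem _ ?_ ?_) ?_
      · exact Submodule.smul_mem _ _ (Submodule.subset_span (Set.mem_insert _ _))
      · exact Submodule.smul_mem _ _ (Submodule.subset_span
          (Set.mem_insert_of_mem _ (Set.mem_insert _ _)))
      · exact Submodule.smul_mem _ _ (Submodule.subset_span
          (Set.mem_insert_of_mem _ (Set.mem_insert_of_mem _ rfl)))
    · rw [Submodule.span_le]
      intro m hm
      simp only [Set.mem_insert_iff, Set.mem_singleton_iff] at hm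
      rcases hm with rfl | rfl | rfl
      · rw [SetLike.mem_coe, Submodule.mem_map]
        refine ⟨tens c ![1, 0, 0], tens_mem c _, ?_⟩
        rw [hmaptens]
        simp only [Matrix.cons_val_zero, Matrix.cons_val_one, Matrix.head_cons,
          Matrix.cons_val_two, Matrix.tail_cons, one_smul, zero_smul, add_zero]
      · rw [SetLike.mem_coe, Submodule.mem_map]
        refine ⟨tens c ![0, 1, 0], tens_mem c _, ?_⟩
        rw [hmaptens]
        simp only [Matrix.cons_val_zero, Matrix.cons_val_one, Matrix.head_cons,
          Matrix.cons_val_two, Matrix.tail_cons, one_smul, zero_smul, add_zero, zero_add]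
      · rw [SetLike.mem_coe, Submodule.mem_map]
        refine ⟨tens c ![0, 0, 1], tens_mem c _, ?_⟩
        rw [hmaptens]
        simp only [Matrix.cons_val_zero, Matrix.cons_val_one, Matrix.head_cons,
          Matrix.cons_val_two, Matrix.tail_cons, one_smul, zero_smul, add_zero, zero_add]
  -- Fam in terms of hmap
  have fin2ne : ∀ x y : K, (![x, y] : Fin 2 → K) ≠ 0 ↔ ¬(x = 0 ∧ y = 0) := by
    intro x y
    constructor
    · intro hne hxy
      apply hne
      funext i
      fin_cases i <;> simp [hxy.1, hxy.2]
    · intro hxy h0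
      exact hxy ⟨by simpa using congrFun h0 0, by simpa using congrFun h0 1⟩
  have hFam' : Fam = {S | ∃ c : Fin 2 → K, c ≠ 0 ∧ S = Submodule.map hmap (Splane c)} := by
    rw [hFam]
    ext S
    simp only [Set.mem_setOf_eq]
    constructor
    · rintro ⟨x, y, hxy, rfl⟩
      refine ⟨![x, y], (fin2ne x y).mpr hxy, ?_⟩
      rw [hplane]
      simp
    · rintro ⟨c, hc, rfl⟩
      refine ⟨c 0, c 1, ?_, by rw [hplane]⟩
      rintro ⟨h0, h1⟩
      apply hc
      funext i
      fin_cases i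
      · simpa using h0
      · simpa using h1
  -- Part 1
  have hpart1 : ∀ x y : F, pl (algebraMap F K x) (algebraMap F K y)
      = Submodule.span K
        {algebraMap F K x • P₁ + algebraMap F K y • P₂,
         Fq1 (algebraMap F K x • P₁ + algebraMap F K y • P₂),
         Fq2 (algebraMap F K x • P₁ + algebraMap F K y • P₂)} := by
    intro x y
    rw [hpl, hXfix2 x, hXfix2 y, hXfix1 x, hXfix1 y]
  refine ⟨hpart1, ?_, ?_, ?_⟩
  · -- Part 2: Fam is a regulus
    rw [hisReg]
    refine ⟨hmap, hmapinj, ?_⟩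
    rw [hFam']
    ext S
    simp only [Set.mem_setOf_eq, span_Splane]
  · -- Part 3
    intro x y hxy
    rw [← hpart1 x y, hFam]
    refine ⟨algebraMap F K x, algebraMap F K y, ?_, rfl⟩
    rintro ⟨h0, h1⟩
    exact hxy ⟨(algebraMap F K).injective (by rw [h0, map_zero]),
      (algebraMap F K).injective (by rw [h1, map_zero])⟩
  · -- Part 4: uniqueness
    intro R hR hmemR
    obtain ⟨h', injh', hR'⟩ := (hisReg R).mp hR
    have getd : ∀ x y : F, ¬(x = 0 ∧ y = 0) → ∃ d : Fin 2 → K,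
        Submodule.map hmap (Splane ![algebraMap F K x, algebraMap F K y])
          = Submodule.map h' (Splane d) := by
      intro x y hxy
      have h1 := hmemR x y hxy
      rw [← hpart1 x y] at h1
      rw [hR'] at h1
      obtain ⟨d, _, hSd⟩ := h1
      refine ⟨d, ?_⟩
      rw [hplane]
      simp only [Matrix.cons_val_zero, Matrix.cons_val_one, Matrix.head_cons]
      rw [hSd, span_Splane]
    have n10 : (![algebraMap F K 1, algebraMap F K 0] : Fin 2 → K) = ![1, 0] := by
      funext i; fin_cases i <;> simp
    have n01 : (![algebraMap F K 0, algebraMap F K 1] : Fin 2 → K) = ![0, 1] := by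
      funext i; fin_cases i <;> simp
    have n11 : (![algebraMap F K 1, algebraMap F K 1] : Fin 2 → K) = ![1, 1] := by
      funext i; fin_cases i <;> simp
    have E0 := getd 1 0 (by simp)
    have E1 := getd 0 1 (by simp)
    have E2 := getd 1 1 (by simp)
    rw [n10] at E0
    rw [n01] at E1
    rw [n11] at E2
    have main := reg_unique hmap h' hmapinj injh' E0 E1 E2
    rw [hR', hFam']
    have hR'' : {S | ∃ c : Fin 2 → K, c ≠ 0 ∧ S = Submodule.map h' (Submodule.span K
        {M : Fin 2 → Fin 3 → K | ∃ u : Fin 3 → K, M = fun i j => c i * u j})}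
        = {T | ∃ c : Fin 2 → K, c ≠ 0 ∧ T = Submodule.map h' (Splane c)} := by
      ext S
      simp only [Set.mem_setOf_eq, span_Splane]
    rw [hR'', ← main]
end
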